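/- arXiv:1302.2751 — 11 statements merged into one kernel-verified Lean document; each statement's English description precedes it below -/
import Mathlib

section
/- Let 𝔤 be a finite-dimensional real Lie algebra equipped with an inner product. If 𝔤 possesses a basis {X₁,…,Xₙ} that is orthonormal and consists of geodesic vectors, then 𝔤 is unimodular, i.e. tr(ad(X)) = 0 for every X ∈ 𝔤. -/
/-- An inner product on a real vector space, given as a positive-definite
symmetric bilinear form. -/
structure IsInnerProduct {L : Type*} [AddCommGroup L] [Module ℝ L]
    (B : L →ₗ[ℝ] L →ₗ[ℝ] ℝ) : Prop where
  symm : ∀ x y : L, B x y = B y x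
  posdef : ∀ x : L, x ≠ 0 → 0 < B x x

/-- `Y` is a geodesic vector: `Y ≠ 0` and `⟨[X,Y],Y⟩ = 0` for all `X`. -/
def IsGeodesicVector {L : Type*} [LieRing L] [LieAlgebra ℝ L]
    (B : L →ₗ[ℝ] L →ₗ[ℝ] ℝ) (Y : L) : Prop :=
  Y ≠ 0 ∧ ∀ X : L, B ⁅X, Y⁆ Y = 0

/-- A family of vectors is orthonormal with respect to the bilinear form `B`. -/
def IsOrthonormalFamily {L : Type*} [AddCommGroup L] [Module ℝ L]
    (B : L →ₗ[ℝ] L →ₗ[ℝ] ℝ) {ι : Type*} [DecidableEq ι] (v : ι → L) : Prop :=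
  ∀ i j, B (v i) (v j) = if i = j then 1 else 0

/-- A real Lie algebra is unimodular if every adjoint map is trace-free. -/
def IsUnimodularLie (L : Type*) [LieRing L] [LieAlgebra ℝ L] : Prop :=
  ∀ X : L, LinearMap.trace ℝ L (LieAlgebra.ad ℝ L X) = 0

/-! The trace of an endomorphism is the sum of its diagonal entries `⟨f bᵢ, bᵢ⟩` in an orthonormal
basis, and for `f = ad X` each of these vanishes because `bᵢ` is a geodesic vector. -/

namespace IsOrthonormalFamily

variable {L : Type*} [AddCommGroup L] [Module ℝ L] {B : L →ₗ[ℝ] L →ₗ[ℝ] ℝ}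
  {ι : Type*} [DecidableEq ι] {b : Module.Basis ι ℝ L}

theorem basis_repr_apply (h : IsOrthonormalFamily B b) (y : L) (i : ι) :
    b.repr y i = B y (b i) := by
  have hcoord : b.coord i = B.flip (b i) := b.ext fun j => by
    simp [h j i, Finsupp.single_apply]
  simpa using LinearMap.congr_fun hcoord y

theorem trace_eq_sum [Fintype ι] (h : IsOrthonormalFamily B b) (f : L →ₗ[ℝ] L) :
    LinearMap.trace ℝ L f = ∑ i, B (f (b i)) (b i) := by
  simp only [LinearMap.trace_eq_matrix_trace ℝ b, Matrix.trace, Matrix.diag_apply,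
    LinearMap.toMatrix_apply, h.basis_repr_apply]

end IsOrthonormalFamily

theorem unimodular_of_orthonormal_geodesic_basis_general
    {L : Type*} [LieRing L] [LieAlgebra ℝ L]
    (B : L →ₗ[ℝ] L →ₗ[ℝ] ℝ)
    {n : ℕ} (b : Module.Basis (Fin n) ℝ L)
    (horth : IsOrthonormalFamily B b)
    (hgeo : ∀ i, IsGeodesicVector B (b i)) :
    IsUnimodularLie L := fun X => by
  rw [horth.trace_eq_sum]
  exact Finset.sum_eq_zero fun i _ => (hgeo i).2 X

/-- If a finite-dimensional real Lie algebra with an inner product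
possesses an orthonormal basis of geodesic vectors, then it is unimodular. -/
theorem unimodular_of_orthonormal_geodesic_basis
    {L : Type*} [LieRing L] [LieAlgebra ℝ L] [Module.Finite ℝ L]
    (B : L →ₗ[ℝ] L →ₗ[ℝ] ℝ) (hB : IsInnerProduct B)
    {n : ℕ} (b : Module.Basis (Fin n) ℝ L)
    (horth : IsOrthonormalFamily B b)
    (hgeo : ∀ i, IsGeodesicVector B (b i)) :
    IsUnimodularLie L :=
  unimodular_of_orthonormal_geodesic_basis_general B b horth hgeo
end

section
/- Let 𝔤 be a finite-dimensional nilpotent real Lie algebra equipped with an inner product ⟨·,·⟩. Then there is an orthonormal basis of (𝔤,⟨·,·⟩) comprised of geodesic vectors. -/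
/-!
The centre of a nonzero nilpotent Lie algebra `L` is nontrivial, so it contains a unit vector `z`,
and central vectors are geodesic. The section `x + ℝz ↦ x - ⟨z, x⟩ z` of `L → L ⧸ ℝz` is injective
with image `z^⊥`, so it pulls the inner product back to `L ⧸ ℝz`, which is again nilpotent. It
carries geodesic vectors to geodesic vectors: for `Y = σ y`, the vectors `[X, Y]` and
`σ [X + ℝz, y]` differ by a multiple of `z`, which is orthogonal to `Y`. By induction on the
dimension, `z` followed by the lift of an orthonormal geodesic basis of `L ⧸ ℝz` is an orthonormal
geodesic basis of `L`.
-/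

section

variable {L : Type*} [LieRing L] [LieAlgebra ℝ L] (B : L →ₗ[ℝ] L →ₗ[ℝ] ℝ)

theorem isGeodesicVector_of_mem_center {z : L} (hz : z ∈ LieAlgebra.center ℝ L) (h0 : z ≠ 0) :
    IsGeodesicVector B z :=
  ⟨h0, fun X => by rw [(LieModule.mem_maxTrivSubmodule ℝ L L z).1 hz X, map_zero,
    LinearMap.zero_apply]⟩

theorem IsGeodesicVector.of_quotient {I : LieIdeal ℝ L} (σ : L ⧸ I →ₗ[ℝ] L)
    (hσ : ∀ q, LieSubmodule.Quotient.mk (σ q) = q) (horth : ∀ x ∈ I, ∀ q, B x (σ q) = 0)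
    {y : L ⧸ I} (hy : IsGeodesicVector (B.compl₁₂ σ σ) y) : IsGeodesicVector B (σ y) := by
  refine ⟨fun h => hy.1 (by rw [← hσ y, h]; rfl), fun X => ?_⟩
  set w : L := ⁅X, σ y⁆
  have hw : LieSubmodule.Quotient.mk (N := I) w = ⁅(LieSubmodule.Quotient.mk X : L ⧸ I), y⁆ := by
    rw [LieSubmodule.Quotient.mk_bracket, hσ]
  have hmem : w - σ (LieSubmodule.Quotient.mk w) ∈ I :=
    (Submodule.Quotient.eq I.toSubmodule).1 (hσ _).symm
  calc B w (σ y) = B (σ (LieSubmodule.Quotient.mk w)) (σ y) := by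
        rw [← sub_eq_zero, ← LinearMap.sub_apply, ← map_sub, horth _ hmem]
    _ = 0 := by rw [hw]; exact hy.2 _

end

instance LieIdeal.isNilpotent_quotient {R L : Type*} [CommRing R] [LieRing L] [LieAlgebra R L]
    [LieRing.IsNilpotent L] (I : LieIdeal R L) : LieRing.IsNilpotent (L ⧸ I) :=
  Function.Surjective.lieAlgebra_isNilpotent (R := R)
    (f := { (I : Submodule R L).mkQ with
      map_lie' := fun {x y} => LieSubmodule.Quotient.mk_bracket I x y })
    (Submodule.Quotient.mk_surjective _)

section

variable {L : Type*} [AddCommGroup L] [Module ℝ L] {B : L →ₗ[ℝ] L →ₗ[ℝ] ℝ}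

theorem IsInnerProduct.compl₁₂ {L' : Type*} [AddCommGroup L'] [Module ℝ L'] (hB : IsInnerProduct B)
    {f : L' →ₗ[ℝ] L} (hf : Function.Injective f) : IsInnerProduct (B.compl₁₂ f f) :=
  ⟨fun _ _ => hB.symm _ _, fun _ hx => hB.posdef _ ((map_ne_zero_iff f hf).2 hx)⟩

theorem IsOrthonormalFamily.linearIndependent {ι : Type*} [DecidableEq ι] {v : ι → L}
    (hv : IsOrthonormalFamily B v) : LinearIndependent ℝ v :=
  LinearMap.BilinForm.linearIndependent_of_iIsOrtho
    (fun i j hij => by simpa [hij] using hv i j) (fun i => by simp [hv i i])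

theorem IsOrthonormalFamily.cons {n : ℕ} {x : L} {v : Fin n → L} (hv : IsOrthonormalFamily B v)
    (hx : B x x = 1) (hxv : ∀ i, B x (v i) = 0) (hvx : ∀ i, B (v i) x = 0) :
    IsOrthonormalFamily B (Fin.cons x v : Fin (n + 1) → L) := by
  intro i j
  cases i using Fin.cases <;> cases j using Fin.cases <;>
    simp [hx, hxv, hvx, hv _ _, Fin.succ_ne_zero, (Fin.succ_ne_zero _).symm]

end

def LieAlgebra.centralLine {R L : Type*} [CommRing R] [LieRing L] [LieAlgebra R L] {z : L}
    (hz : z ∈ LieAlgebra.center R L) : LieIdeal R L where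
  toSubmodule := R ∙ z
  lie_mem {x y} hy := by
    obtain ⟨c, rfl⟩ := Submodule.mem_span_singleton.1 hy
    rw [lie_smul, (LieModule.mem_maxTrivSubmodule R L L z).1 hz x, smul_zero]
    exact (R ∙ z).zero_mem

section

open LieAlgebra

variable {L : Type*} [LieRing L] [LieAlgebra ℝ L] (B : L →ₗ[ℝ] L →ₗ[ℝ] ℝ) {z : L}
  (hz : z ∈ center ℝ L) (hzz : B z z = 1)

def centralLineSection : L ⧸ centralLine hz →ₗ[ℝ] L :=
  (centralLine hz).toSubmodule.liftQ (LinearMap.id - (B z).smulRight z) <| by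
    rw [centralLine, Submodule.span_singleton_le_iff_mem, LinearMap.mem_ker]
    simp [hzz]

theorem centralLineSection_mk (x : L) :
    centralLineSection B hz hzz (LieSubmodule.Quotient.mk x) = x - B z x • z :=
  rfl

theorem mk_centralLineSection (q : L ⧸ centralLine hz) :
    LieSubmodule.Quotient.mk (centralLineSection B hz hzz q) = q := by
  induction q using Submodule.Quotient.induction_on with
  | H x =>
    rw [centralLineSection_mk]
    refine (Submodule.Quotient.eq _).2 ?_
    rw [sub_sub_cancel_left]
    exact neg_mem (Submodule.smul_mem _ _ (Submodule.mem_span_singleton_self z))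

theorem centralLineSection_orthogonal (x : L) (hx : x ∈ centralLine hz) (q : L ⧸ centralLine hz) :
    B x (centralLineSection B hz hzz q) = 0 := by
  obtain ⟨c, rfl⟩ := Submodule.mem_span_singleton.1 hx
  induction q using Submodule.Quotient.induction_on with
  | H y =>
    rw [centralLineSection_mk]
    simp [hzz]

theorem finrank_quotient_centralLine_add_one [Module.Finite ℝ L] (hz0 : z ≠ 0) :
    Module.finrank ℝ (L ⧸ centralLine hz) + 1 = Module.finrank ℝ L := by
  have := Submodule.finrank_quotient_add_finrank (centralLine hz).toSubmodule
  rwa [centralLine, finrank_span_singleton hz0] at this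

end

theorem IsInnerProduct.exists_mem_center_apply_self_eq_one {L : Type*} [LieRing L]
    [LieAlgebra ℝ L] [Nontrivial L] [LieRing.IsNilpotent L] {B : L →ₗ[ℝ] L →ₗ[ℝ] ℝ}
    (hB : IsInnerProduct B) : ∃ z ∈ LieAlgebra.center ℝ L, B z z = 1 := by
  have := LieAlgebra.non_trivial_center_of_isNilpotent (R := ℝ) (L := L)
  obtain ⟨⟨z, hz⟩, hz0⟩ := exists_ne (0 : LieAlgebra.center ℝ L)
  have hpos : 0 < B z z := hB.posdef z fun h => hz0 (Subtype.ext h)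
  refine ⟨(√(B z z))⁻¹ • z, Submodule.smul_mem _ _ hz, ?_⟩
  rw [LinearMap.map_smul₂, map_smul, smul_eq_mul, smul_eq_mul, ← mul_assoc,
    ← mul_inv, Real.mul_self_sqrt hpos.le, inv_mul_cancel₀ hpos.ne']

universe u

theorem exists_orthonormal_geodesic_family : ∀ (n : ℕ) {L : Type u} [LieRing L] [LieAlgebra ℝ L]
    [Module.Finite ℝ L] [LieRing.IsNilpotent L] {B : L →ₗ[ℝ] L →ₗ[ℝ] ℝ}, IsInnerProduct B →
    Module.finrank ℝ L = n →
    ∃ v : Fin n → L, IsOrthonormalFamily B v ∧ ∀ i, IsGeodesicVector B (v i)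
  | 0, _, _, _, _, _, _, _, _ => ⟨Fin.elim0, fun i => i.elim0, fun i => i.elim0⟩
  | n + 1, L, _, _, _, _, B, hB, hn => by
    have : Nontrivial L := Module.nontrivial_of_finrank_eq_succ hn
    obtain ⟨z, hz, hzz⟩ := hB.exists_mem_center_apply_self_eq_one
    have hz0 : z ≠ 0 := by rintro rfl; simp at hzz
    set σ := centralLineSection B hz hzz
    have hσ : ∀ q, LieSubmodule.Quotient.mk (σ q) = q := mk_centralLineSection B hz hzz
    have horth := centralLineSection_orthogonal B hz hzz
    have hzσ : ∀ q, B z (σ q) = 0 := horth z (Submodule.mem_span_singleton_self z)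
    obtain ⟨c, hc, hcgeo⟩ := exists_orthonormal_geodesic_family n
      (hB.compl₁₂ (Function.LeftInverse.injective hσ))
      (by have := finrank_quotient_centralLine_add_one hz hz0; omega)
    have hσc : IsOrthonormalFamily B (σ ∘ c) := hc
    refine ⟨Fin.cons z (σ ∘ c),
      hσc.cons hzz (fun _ => hzσ _) (fun _ => (hB.symm _ _).trans (hzσ _)),
      Fin.cases (isGeodesicVector_of_mem_center B hz hz0)
        (fun i => (hcgeo i).of_quotient B σ hσ horth)⟩

/-- Every finite-dimensional nilpotent real Lie algebra with an inner
product has an orthonormal basis comprised of geodesic vectors. -/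
theorem nilpotent_has_orthonormal_geodesic_basis
    {L : Type*} [LieRing L] [LieAlgebra ℝ L] [Module.Finite ℝ L]
    [LieRing.IsNilpotent L]
    (B : L →ₗ[ℝ] L →ₗ[ℝ] ℝ) (hB : IsInnerProduct B) :
    ∃ b : Module.Basis (Fin (Module.finrank ℝ L)) ℝ L,
      IsOrthonormalFamily B b ∧ ∀ i, IsGeodesicVector B (b i) := by
  obtain ⟨v, hv, hgeo⟩ := exists_orthonormal_geodesic_family _ hB rfl
  refine ⟨basisOfLinearIndependentOfCardEqFinrank' v hv.linearIndependent (Fintype.card_fin _),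
    ?_, ?_⟩ <;> rwa [coe_basisOfLinearIndependentOfCardEqFinrank']
end

section
/- Let 𝔤 be a finite-dimensional unimodular real Lie algebra having an abelian ideal 𝔥 of codimension one. Then for every inner product ⟨·,·⟩ on 𝔤 there is an orthonormal basis of (𝔤,⟨·,·⟩) comprised of geodesic vectors. -/
open Module RealInnerProductSpace

section InnerProductSpace

variable {E : Type*} [NormedAddCommGroup E] [InnerProductSpace ℝ E]

noncomputable def Submodule.compression (K : Submodule ℝ E) [K.HasOrthogonalProjection]
    (T : E →ₗ[ℝ] E) : K →ₗ[ℝ] K :=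
  K.orthogonalProjectionOnto.toLinearMap ∘ₗ T ∘ₗ K.subtype

lemma Submodule.inner_compression_apply (K : Submodule ℝ E) [K.HasOrthogonalProjection]
    (T : E →ₗ[ℝ] E) (x y : K) : ⟪x, K.compression T y⟫ = ⟪(x : E), T y⟫ := by
  simp [Submodule.compression]

lemma trace_compression_orthogonal_span_singleton [FiniteDimensional ℝ E] {v : E}
    (hv : ‖v‖ = 1) (T : E →ₗ[ℝ] E) :
    LinearMap.trace ℝ _ ((ℝ ∙ v)ᗮ.compression T) = LinearMap.trace ℝ E T - ⟪v, T v⟫ := by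
  have hproj : (T ∘ₗ (ℝ ∙ v)ᗮ.subtype) ∘ₗ (ℝ ∙ v)ᗮ.orthogonalProjectionOnto.toLinearMap =
      T - (innerₛₗ ℝ v).smulRight (T v) := by
    ext x
    simp [Submodule.starProjection_orthogonal, Submodule.starProjection_unit_singleton ℝ hv]
  rw [Submodule.compression, LinearMap.trace_comp_comm', hproj, map_sub,
    LinearMap.trace_smulRight]
  simp

lemma Orthonormal.fin_cons {n : ℕ} {w : Fin n → E} (hw : Orthonormal ℝ w) {v : E}
    (hv : ‖v‖ = 1) (hvw : ∀ i, ⟪v, w i⟫ = 0) :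
    Orthonormal ℝ (Fin.cons v w : Fin (n + 1) → E) := by
  classical
  rw [orthonormal_iff_ite] at hw ⊢
  intro i j
  cases i using Fin.cases <;> cases j using Fin.cases <;>
    simp [hv, hvw, real_inner_comm v, hw, (Fin.succ_ne_zero _).symm]

lemma OrthonormalBasis.exists_coe_eq_cons [FiniteDimensional ℝ E] {n : ℕ}
    (hn : finrank ℝ E = n + 1) {v : E} (hv : ‖v‖ = 1) (b : OrthonormalBasis (Fin n) ℝ (ℝ ∙ v)ᗮ) :
    ∃ c : OrthonormalBasis (Fin (n + 1)) ℝ E, ⇑c = Fin.cons v (fun i => (b i : E)) := by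
  have hon : Orthonormal ℝ (Fin.cons v (fun i => (b i : E)) : Fin (n + 1) → E) :=
    (b.orthonormal.comp_linearIsometry (ℝ ∙ v)ᗮ.subtypeₗᵢ).fin_cons hv
      fun i => Submodule.inner_right_of_mem_orthogonal (Submodule.mem_span_singleton_self v)
        (b i).2
  have hcard : Fintype.card (Fin (n + 1)) = finrank ℝ E := by simp [hn]
  exact ⟨(basisOfOrthonormalOfCardEqFinrank hon hcard).toOrthonormalBasis (by simpa using hon),
    by simp⟩

lemma exists_norm_eq_one_inner_map_self_eq_zero [FiniteDimensional ℝ E] [Nontrivial E]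
    {T : E →ₗ[ℝ] E} (hT : LinearMap.trace ℝ E T = 0) : ∃ v : E, ‖v‖ = 1 ∧ ⟪v, T v⟫ = 0 := by
  let b := stdOrthonormalBasis ℝ E
  have : Nonempty (Fin (finrank ℝ E)) := ⟨⟨0, finrank_pos⟩⟩
  have hsum : ∑ i, ⟪b i, T (b i)⟫ = 0 := (LinearMap.trace_eq_sum_inner T b).symm.trans hT
  obtain ⟨i, -, hi⟩ := Finset.exists_le_of_sum_le (s := Finset.univ) Finset.univ_nonempty
    (f := fun i => ⟪b i, T (b i)⟫) (g := 0) (by simp [hsum])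
  obtain ⟨j, -, hj⟩ := Finset.exists_le_of_sum_le (s := Finset.univ) Finset.univ_nonempty
    (f := 0) (g := fun i => ⟪b i, T (b i)⟫) (by simp [hsum])
  rcases eq_or_ne i j with rfl | hij
  · exact ⟨b i, b.orthonormal.1 i, le_antisymm hi hj⟩
  have hrank : 1 < Module.rank ℝ E := by
    refine one_lt_rank_of_one_lt_finrank ?_
    simpa [← finrank_eq_card_basis b.toBasis] using Fintype.one_lt_card_iff.2 ⟨i, j, hij⟩
  have hcont : Continuous fun x => ⟪x, T x⟫ := by fun_prop
  obtain ⟨v, hv, hv0⟩ :=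
    (isConnected_sphere hrank 0 zero_le_one).isPreconnected.intermediate_value
      (by simp [b.orthonormal.1 i]) (by simp [b.orthonormal.1 j]) hcont.continuousOn ⟨hi, hj⟩
  exact ⟨v, by simpa using hv, hv0⟩

lemma exists_orthonormalBasis_cons_inner_map_self_eq_zero [FiniteDimensional ℝ E] {n : ℕ}
    (hn : finrank ℝ E = n + 1) {v : E} (hv : ‖v‖ = 1) {T : E →ₗ[ℝ] E} (hTv : ⟪v, T v⟫ = 0)
    (b : OrthonormalBasis (Fin n) ℝ (ℝ ∙ v)ᗮ)
    (hb : ∀ i, ⟪b i, (ℝ ∙ v)ᗮ.compression T (b i)⟫ = 0) :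
    ∃ c : OrthonormalBasis (Fin (n + 1)) ℝ E, c 0 = v ∧ ∀ i, ⟪c i, T (c i)⟫ = 0 := by
  obtain ⟨c, hc⟩ := OrthonormalBasis.exists_coe_eq_cons hn hv b
  refine ⟨c, by simp [hc], Fin.cases (by simpa [hc] using hTv) fun i => ?_⟩
  simp only [hc, Fin.cons_succ]
  exact ((ℝ ∙ v)ᗮ.inner_compression_apply T _ _).symm.trans (hb i)

theorem exists_orthonormalBasis_inner_map_self_eq_zero [FiniteDimensional ℝ E] {n : ℕ}
    (hn : finrank ℝ E = n) {T : E →ₗ[ℝ] E} (hT : LinearMap.trace ℝ E T = 0) :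
    ∃ b : OrthonormalBasis (Fin n) ℝ E, ∀ i, ⟪b i, T (b i)⟫ = 0 := by
  induction n generalizing E with
  | zero => exact ⟨(stdOrthonormalBasis ℝ E).reindex (finCongr hn), fun i => i.elim0⟩
  | succ n ih =>
    have : Nontrivial E := Module.nontrivial_of_finrank_eq_succ hn
    obtain ⟨v, hv, hTv⟩ := exists_norm_eq_one_inner_map_self_eq_zero hT
    have : Fact (finrank ℝ E = n + 1) := ⟨hn⟩
    have hrank : finrank ℝ (ℝ ∙ v)ᗮ = n :=
      Submodule.finrank_orthogonal_span_singleton (ne_zero_of_norm_ne_zero (hv ▸ one_ne_zero))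
    have htrace : LinearMap.trace ℝ _ ((ℝ ∙ v)ᗮ.compression T) = 0 := by
      rw [trace_compression_orthogonal_span_singleton hv, hT, hTv, sub_zero]
    obtain ⟨b, hb⟩ := ih hrank htrace
    obtain ⟨c, -, hc⟩ := exists_orthonormalBasis_cons_inner_map_self_eq_zero hn hv hTv b hb
    exact ⟨c, hc⟩

lemma Submodule.exists_norm_eq_one_eq_orthogonal_span_singleton [FiniteDimensional ℝ E]
    (K : Submodule ℝ E) (hK : finrank ℝ K + 1 = finrank ℝ E) :
    ∃ v : E, ‖v‖ = 1 ∧ K = (ℝ ∙ v)ᗮ := by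
  have hKperp : finrank ℝ Kᗮ = 1 := Submodule.finrank_add_finrank_orthogonal' hK
  have : Nontrivial Kᗮ := Module.nontrivial_of_finrank_eq_succ hKperp
  obtain ⟨v, hv⟩ := exists_norm_eq Kᗮ zero_le_one
  have hv0 : (v : E) ≠ 0 := by simpa using ne_zero_of_norm_ne_zero (hv ▸ one_ne_zero)
  have hspan : ℝ ∙ (v : E) = Kᗮ :=
    Submodule.eq_of_le_of_finrank_eq ((Submodule.span_singleton_le_iff_mem _ _).2 v.2)
      (by rw [finrank_span_singleton hv0, hKperp])
  exact ⟨v, by simpa using hv, by rw [hspan, Submodule.orthogonal_orthogonal]⟩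

end InnerProductSpace

section LieIdeal

variable {R L : Type*} [CommRing R] [LieRing L] [LieAlgebra R L] {H : LieIdeal R L} {A : L}

lemma LieIdeal.lie_mem_of_forall_exists_sub_smul_mem (hA : ∀ X, ∃ t : R, X - t • A ∈ H)
    (X : L) : ⁅X, A⁆ ∈ H := by
  obtain ⟨t, ht⟩ := hA X
  simpa [sub_lie] using lie_mem_left R L H _ A ht

lemma LieIdeal.lie_eq_smul_lie_of_isLieAbelian (hab : IsLieAbelian H) {X Y : L} {t : R}
    (hX : X - t • A ∈ H) (hY : Y ∈ H) : ⁅X, Y⁆ = t • ⁅A, Y⁆ := by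
  have h : ⁅X - t • A, Y⁆ = 0 := congrArg Subtype.val (hab.trivial ⟨_, hX⟩ ⟨Y, hY⟩)
  rwa [sub_lie, smul_lie, sub_eq_zero] at h

end LieIdeal

section Geodesic

variable {L : Type*} [LieRing L] [LieAlgebra ℝ L] {B : L →ₗ[ℝ] L →ₗ[ℝ] ℝ} {H : LieIdeal ℝ L}
  {A : L}

lemma isGeodesicVector_of_forall_exists_sub_smul_mem (hA : ∀ X, ∃ t : ℝ, X - t • A ∈ H)
    (hA0 : A ≠ 0) (hAH : ∀ h ∈ H, B h A = 0) : IsGeodesicVector B A :=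
  ⟨hA0, fun X => hAH _ (H.lie_mem_of_forall_exists_sub_smul_mem hA X)⟩

lemma isGeodesicVector_of_mem_of_isLieAbelian (hab : IsLieAbelian H)
    (hA : ∀ X, ∃ t : ℝ, X - t • A ∈ H) {Y : L} (hY0 : Y ≠ 0) (hY : Y ∈ H)
    (hAY : B ⁅A, Y⁆ Y = 0) : IsGeodesicVector B Y := by
  refine ⟨hY0, fun X => ?_⟩
  obtain ⟨t, ht⟩ := hA X
  rw [H.lie_eq_smul_lie_of_isLieAbelian hab ht hY, map_smul, LinearMap.smul_apply, hAY, smul_zero]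

end Geodesic

@[reducible]
def IsInnerProduct.toCore {L : Type*} [AddCommGroup L] [Module ℝ L]
    {B : L →ₗ[ℝ] L →ₗ[ℝ] ℝ} (hB : IsInnerProduct B) : InnerProductSpace.Core ℝ L where
  inner x y := B x y
  conj_inner_symm x y := hB.symm y x
  re_inner_nonneg x := by
    rcases eq_or_ne x 0 with rfl | hx
    · simp
    · exact (hB.posdef x hx).le
  add_left x y z := by simp
  smul_left x y r := by simp
  definite x hx := by
    by_contra h
    exact (hB.posdef x h).ne' hx

/-- A finite-dimensional unimodular real Lie algebra with a codimension-one
abelian ideal has, for every inner product, an orthonormal basis of geodesic vectors. -/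
theorem codim_one_abelian_ideal_orthonormal_geodesic_basis
    {L : Type*} [LieRing L] [LieAlgebra ℝ L] [Module.Finite ℝ L]
    (hU : IsUnimodularLie L)
    (H : LieIdeal ℝ L) (hab : IsLieAbelian H)
    (hcodim : Module.finrank ℝ H + 1 = Module.finrank ℝ L)
    (B : L →ₗ[ℝ] L →ₗ[ℝ] ℝ) (hB : IsInnerProduct B) :
    ∃ b : Module.Basis (Fin (Module.finrank ℝ L)) ℝ L,
      IsOrthonormalFamily B b ∧ ∀ i, IsGeodesicVector B (b i) := by
  -- in this structure `⟪x, y⟫` unfolds to `B x y`, which the steps below use silently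
  let _ := hB.toCore.toNormedAddCommGroup
  let _ : InnerProductSpace ℝ L := .ofCore hB.toCore.toCore
  obtain ⟨A, hA, hHA⟩ := H.toSubmodule.exists_norm_eq_one_eq_orthogonal_span_singleton hcodim
  have hmem : ∀ Y, Y ∈ H ↔ ⟪A, Y⟫ = 0 := fun Y => by
    rw [← LieSubmodule.mem_toSubmodule, hHA, Submodule.mem_orthogonal_singleton_iff_inner_right]
  have hdecomp : ∀ X, ∃ t : ℝ, X - t • A ∈ H := fun X => ⟨⟪A, X⟫, (hmem _).2 <| by
    rw [inner_sub_right, real_inner_smul_right, real_inner_self_eq_norm_sq, hA]; ring⟩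
  have htrace : LinearMap.trace ℝ _ ((ℝ ∙ A)ᗮ.compression (LieAlgebra.ad ℝ L A)) = 0 := by
    rw [trace_compression_orthogonal_span_singleton hA, hU A, LieAlgebra.ad_apply, lie_self,
      inner_zero_right, sub_zero]
  obtain ⟨b, hb⟩ := exists_orthonormalBasis_inner_map_self_eq_zero (by rw [← hHA]) htrace
  obtain ⟨c, hc0, hc⟩ := exists_orthonormalBasis_cons_inner_map_self_eq_zero hcodim.symm hA
    (by simp) b hb
  refine ⟨(c.reindex (finCongr hcodim)).toBasis, fun i j => ?_, fun i => ?_⟩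
  · exact orthonormal_iff_ite.1 (c.reindex _).orthonormal i j
  simp only [OrthonormalBasis.coe_toBasis, OrthonormalBasis.reindex_apply]
  generalize (finCongr hcodim).symm i = k
  rcases eq_or_ne k 0 with rfl | hk
  · refine hc0 ▸ isGeodesicVector_of_forall_exists_sub_smul_mem hdecomp
      (hc0 ▸ c.orthonormal.ne_zero 0) fun h hh => ?_
    rw [hB.symm]
    exact (hmem h).1 hh
  · refine isGeodesicVector_of_mem_of_isLieAbelian hab hdecomp (c.orthonormal.ne_zero k)
      ((hmem _).2 (hc0 ▸ c.orthonormal.2 hk.symm)) ?_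
    rw [hB.symm]
    exact hc k
end

section
/- Let 𝔤 be a finite-dimensional unimodular real Lie algebra whose derived algebra 𝔤' = [𝔤,𝔤] is one-dimensional. Then 𝔤' is contained in the centre of 𝔤; consequently 𝔤 is nilpotent. -/
/-!
Every `ad X` maps `𝔤` into the line `𝔤'`, so its trace equals the trace of its restriction
to `𝔤'`; on a line an endomorphism is multiplication by its trace, which vanishes by
unimodularity. Hence `ad X` kills `𝔤'`, and then `[𝔤, [𝔤, 𝔤]] = 0`.
-/

namespace LinearMap

variable {K V : Type*} [Field K] [AddCommGroup V] [Module K V]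

theorem eq_trace_smul_id_of_finrank_eq_one (hV : Module.finrank K V = 1) (f : V →ₗ[K] V) :
    f = trace K V f • id := by
  have : FiniteDimensional K V := Module.finite_of_finrank_eq_succ hV
  obtain ⟨c, rfl, -⟩ := f.existsUnique_eq_smul_id_of_finrank_eq_one hV
  simp [trace_id, hV]

theorem apply_eq_trace_smul_of_forall_mem [FiniteDimensional K V] {W : Submodule K V}
    (hW : Module.finrank K W = 1) {f : V →ₗ[K] V} (hf : ∀ v, f v ∈ W) {w : V} (hw : w ∈ W) :
    f w = trace K V f • w := by
  have hrestrict := eq_trace_smul_id_of_finrank_eq_one hW (f.restrict fun v _ ↦ hf v)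
  rw [trace_restrict_eq_of_forall_mem W f hf] at hrestrict
  simpa using congrArg Subtype.val (LinearMap.congr_fun hrestrict ⟨w, hw⟩)

end LinearMap

namespace LieAlgebra

variable {R L : Type*} [CommRing R] [LieRing L] [LieAlgebra R L]

theorem lie_mem_derivedSeries_one (x y : L) : ⁅x, y⁆ ∈ derivedSeries R L 1 :=
  LieSubmodule.lie_mem_lie (LieSubmodule.mem_top x) (LieSubmodule.mem_top y)

theorem lowerCentralSeries_one_eq_derivedSeries_one :
    LieModule.lowerCentralSeries R L L 1 = derivedSeries R L 1 := rfl

theorem isNilpotent_of_derivedSeries_one_le_center (h : derivedSeries R L 1 ≤ center R L) :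
    LieRing.IsNilpotent L := by
  refine LieModule.IsNilpotent.mk (R := R) (L := L) (M := L) (k := 2) ?_
  rw [LieModule.lowerCentralSeries_succ, lowerCentralSeries_one_eq_derivedSeries_one,
    LieSubmodule.lie_eq_bot_iff]
  exact fun x _ z hz ↦ (LieModule.mem_maxTrivSubmodule R L L z).mp (h hz) x

end LieAlgebra

/-- In a finite-dimensional unimodular real Lie algebra whose derived
algebra is one-dimensional, the derived algebra is central, and the algebra is nilpotent. -/
theorem derived_dim_one_central_and_nilpotent
    {L : Type*} [LieRing L] [LieAlgebra ℝ L] [Module.Finite ℝ L]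
    (hU : IsUnimodularLie L)
    (hdim : Module.finrank ℝ (LieAlgebra.derivedSeries ℝ L 1) = 1) :
    LieAlgebra.derivedSeries ℝ L 1 ≤ LieAlgebra.center ℝ L ∧
      LieRing.IsNilpotent L := by
  have hcentral : LieAlgebra.derivedSeries ℝ L 1 ≤ LieAlgebra.center ℝ L := by
    intro z hz
    rw [LieAlgebra.center, LieModule.mem_maxTrivSubmodule]
    intro x
    simpa [hU x] using (LieAlgebra.ad ℝ L x).apply_eq_trace_smul_of_forall_mem hdim
      (LieAlgebra.lie_mem_derivedSeries_one x) hz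
  exact ⟨hcentral, LieAlgebra.isNilpotent_of_derivedSeries_one_le_center hcentral⟩
end

section
/- Let 𝔤 be a 4-dimensional solvable unimodular real Lie algebra whose derived algebra 𝔤' = [𝔤,𝔤] is 2-dimensional. Then 𝔤 possesses an abelian ideal of codimension one. -/
open Module

namespace LinearMap

variable {K V : Type*} [Field K] [AddCommGroup V] [Module K V] [FiniteDimensional K V]

theorem exists_linearIndependent_pair_apply_of_trace_eq_zero [NeZero (2 : K)]
    (hV : finrank K V = 2) {A : End K V} (hA : trace K V A = 0) (hA0 : A ≠ 0) :
    ∃ v, LinearIndependent K ![v, A v] := by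
  by_contra! h
  obtain ⟨a, rfl⟩ := exists_eq_smul_id_of_forall_notLinearIndependent h
  rw [map_smul, trace_one, hV, smul_eq_mul, Nat.cast_ofNat, mul_eq_zero] at hA
  exact hA0 (by simp [hA.resolve_right two_ne_zero])

theorem exists_eq_smul_of_commute_of_trace_eq_zero [NeZero (2 : K)]
    (hV : finrank K V = 2) {A B : End K V} (hA : trace K V A = 0) (hB : trace K V B = 0)
    (hAB : Commute A B) (hA0 : A ≠ 0) : ∃ t : K, B = t • A := by
  -- `v, A v` is a basis, so the commutant of `A` is spanned by `1` and `A`.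
  obtain ⟨v, hv⟩ := exists_linearIndependent_pair_apply_of_trace_eq_zero hV hA hA0
  have hspan : Submodule.span K {v, A v} = ⊤ := by
    rw [← Matrix.range_cons_cons_empty]
    exact hv.span_eq_top_of_card_eq_finrank (by simp [hV])
  obtain ⟨α, β, hBv⟩ := Submodule.mem_span_pair.mp (hspan ▸ Submodule.mem_top : B v ∈ _)
  have hC : B - α • 1 - β • A = 0 := by
    have hCA : Commute (B - α • 1 - β • A) A :=
      ((hAB.symm.sub_left ((Commute.one_left A).smul_left α)).sub_left
        ((Commute.refl A).smul_left β))
    have hCv : (B - α • 1 - β • A) v = 0 := by simp [← hBv]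
    refine LinearMap.ext_on hspan ?_
    rintro w (rfl | rfl)
    · simpa using hCv
    · rw [← Module.End.mul_apply, hCA.eq, Module.End.mul_apply, hCv]; simp
  have hB' : B = α • 1 + β • A := by rw [← sub_eq_zero, ← sub_sub, hC]
  rw [hB', map_add, map_smul, map_smul, trace_one, hV, hA] at hB
  have hα : α = 0 := by simpa [two_ne_zero] using hB
  exact ⟨β, by simp [hB', hα]⟩

theorem finrank_le_one_of_commute_of_trace_eq_zero [NeZero (2 : K)] (hV : finrank K V = 2)
    (W : Submodule K (End K V)) (htr : ∀ A ∈ W, trace K V A = 0)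
    (hcomm : ∀ A ∈ W, ∀ B ∈ W, Commute A B) : finrank K W ≤ 1 := by
  by_cases hW : ∃ A ∈ W, A ≠ 0
  · obtain ⟨A, hAW, hA0⟩ := hW
    refine finrank_le_one ⟨A, hAW⟩ fun ⟨B, hBW⟩ ↦ ?_
    obtain ⟨t, rfl⟩ := exists_eq_smul_of_commute_of_trace_eq_zero hV (htr A hAW) (htr B hBW)
      (hcomm A hAW B hBW) hA0
    exact ⟨t, rfl⟩
  · push Not at hW
    rw [(Submodule.eq_bot_iff W).mpr hW, finrank_bot]
    exact zero_le_one

end LinearMap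

namespace LieAlgebra

variable {K M : Type*} [Field K] [LieRing M] [LieAlgebra K M] [FiniteDimensional K M]

theorem isLieAbelian_of_finrank_eq_two_of_trace_ad_eq_zero (hM : finrank K M = 2)
    (htr : ∀ x : M, LinearMap.trace K M (ad K M x) = 0) : IsLieAbelian M := by
  let b : Module.Basis (Fin 2) K M := Module.finBasisOfFinrankEq K M hM
  have htr_b (i : Fin 2) : ∑ j, b.repr ⁅b i, b j⁆ j = 0 := by
    simpa [LinearMap.trace_eq_matrix_trace K b, Matrix.trace, LinearMap.toMatrix_apply]
      using htr (b i)
  -- `tr (ad (b 0))` and `tr (ad (b 1))` are the two coordinates of `⁅b 0, b 1⁆`, up to sign.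
  have h01 : ⁅b 0, b 1⁆ = 0 := by
    have h0 := htr_b 0
    have h1 := htr_b 1
    simp only [Fin.sum_univ_two, lie_self, map_zero, Finsupp.coe_zero, Pi.zero_apply,
      zero_add, add_zero] at h0 h1
    rw [← lie_skew, map_neg, Finsupp.coe_neg, Pi.neg_apply, neg_eq_zero] at h1
    refine b.repr.injective (Finsupp.ext fun j ↦ ?_)
    fin_cases j <;> simpa
  have had : (ad K M : M →ₗ[K] End K M) = 0 := b.ext fun i ↦ b.ext fun j ↦ by
    fin_cases i <;> fin_cases j <;> simp [h01, ← lie_skew (b 1)]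
  exact ⟨fun x y ↦ by simpa using LinearMap.congr_fun (LinearMap.congr_fun had x) y⟩

end LieAlgebra

open LieAlgebra

section DerivedAlgebra

variable {K L : Type*} [Field K] [LieRing L] [LieAlgebra K L]

theorem LieAlgebra.lie_mem_derivedSeries_one_s9 (x y : L) : ⁅x, y⁆ ∈ derivedSeries K L 1 := by
  rw [derivedSeries_def, derivedSeriesOfIdeal_succ, derivedSeriesOfIdeal_zero]
  exact LieSubmodule.lie_mem_lie (LieSubmodule.mem_top x) (LieSubmodule.mem_top y)

def LieIdeal.ofDerivedSeriesLE (p : Submodule K L)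
    (hp : (derivedSeries K L 1 : Submodule K L) ≤ p) : LieIdeal K L where
  toSubmodule := p
  lie_mem {x m} _ := hp (lie_mem_derivedSeries_one_s9 x m)

theorem lie_eq_zero_of_mem_sup_span_singleton {p : Submodule K L} {x : L}
    (hp : ∀ a ∈ p, ∀ b ∈ p, ⁅a, b⁆ = 0) (hx : ∀ a ∈ p, ⁅x, a⁆ = 0) :
    ∀ a ∈ p ⊔ K ∙ x, ∀ b ∈ p ⊔ K ∙ x, ⁅a, b⁆ = 0 := by
  intro _ ha _ hb
  obtain ⟨a, haP, _, hsx, rfl⟩ := Submodule.mem_sup.mp ha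
  obtain ⟨b, hbP, _, htx, rfl⟩ := Submodule.mem_sup.mp hb
  obtain ⟨s, rfl⟩ := Submodule.mem_span_singleton.mp hsx
  obtain ⟨t, rfl⟩ := Submodule.mem_span_singleton.mp htx
  have hax : ⁅a, x⁆ = 0 := by rw [← lie_skew, hx a haP, neg_zero]
  simp [hp a haP b hbP, hx b hbP, hax]

variable [FiniteDimensional K L]

theorem LieIdeal.exists_isLieAbelian_finrank_eq_add_one {I : LieIdeal K L}
    (hLI : derivedSeries K L 1 ≤ I) (hI : IsLieAbelian I) {X : L}
    (hX : X ∈ LieModule.ker K L I) (hXI : X ∉ I) :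
    ∃ H : LieIdeal K L, IsLieAbelian H ∧ finrank K H = finrank K I + 1 := by
  have hIcomm (a : L) (ha : a ∈ I) (b : L) (hb : b ∈ I) : ⁅a, b⁆ = 0 :=
    congrArg Subtype.val (hI.trivial ⟨a, ha⟩ ⟨b, hb⟩)
  have hXcomm (a : L) (ha : a ∈ I) : ⁅X, a⁆ = 0 :=
    congrArg Subtype.val ((LieModule.mem_ker K L I X).mp hX ⟨a, ha⟩)
  refine ⟨ofDerivedSeriesLE (I ⊔ K ∙ X) (le_sup_of_le_left hLI), ⟨?_⟩, ?_⟩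
  · rintro ⟨a, ha⟩ ⟨b, hb⟩
    exact Subtype.ext (lie_eq_zero_of_mem_sup_span_singleton hIcomm hXcomm a ha b hb)
  · exact Submodule.finrank_sup_span_singleton hXI

theorem LieAlgebra.trace_toEnd_derivedSeries_one (x : L) :
    LinearMap.trace K (derivedSeries K L 1) (LieModule.toEnd K L (derivedSeries K L 1) x) =
      LinearMap.trace K L (ad K L x) :=
  LinearMap.trace_restrict_eq_of_forall_mem (derivedSeries K L 1 : Submodule K L) (ad K L x)
    (lie_mem_derivedSeries_one_s9 x)

theorem LieAlgebra.isLieAbelian_derivedSeries_one_of_finrank_eq_two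
    (htr : ∀ x : L, LinearMap.trace K L (ad K L x) = 0)
    (h2 : finrank K (derivedSeries K L 1) = 2) : IsLieAbelian (derivedSeries K L 1) :=
  isLieAbelian_of_finrank_eq_two_of_trace_ad_eq_zero h2 fun y ↦
    (trace_toEnd_derivedSeries_one (K := K) (y : L)).trans (htr y)

theorem LieAlgebra.finrank_le_finrank_ker_derivedSeries_one_add_one [NeZero (2 : K)]
    (htr : ∀ x : L, LinearMap.trace K L (ad K L x) = 0)
    (h2 : finrank K (derivedSeries K L 1) = 2) :
    finrank K L ≤ finrank K (LieModule.ker K L (derivedSeries K L 1)) + 1 := by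
  set I := derivedSeries K L 1
  let φ : L →ₗ[K] End K I := LieModule.toEnd K L I
  have hI := isLieAbelian_derivedSeries_one_of_finrank_eq_two htr h2
  have hrange : finrank K (LinearMap.range φ) ≤ 1 := by
    refine LinearMap.finrank_le_one_of_commute_of_trace_eq_zero h2 _ ?_ ?_
    · rintro _ ⟨x, rfl⟩
      exact (trace_toEnd_derivedSeries_one x).trans (htr x)
    · rintro _ ⟨x, rfl⟩ _ ⟨y, rfl⟩
      have hxy : ∀ m : I, ⁅⁅x, y⁆, m⁆ = 0 := (LieModule.mem_ker K L I _).mp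
        ((LieIdeal.isLieAbelian_iff K L).mp hI (lie_mem_derivedSeries_one_s9 x y))
      refine LinearMap.ext fun m ↦ ?_
      simp [φ, leibniz_lie x y m, hxy m]
  have := φ.finrank_range_add_finrank_ker
  have hker : finrank K (LieModule.ker K L I) = finrank K (LinearMap.ker φ) := rfl
  omega

end DerivedAlgebra

theorem dim_four_derived_two_has_codim_one_abelian_ideal_general
    {L : Type*} [LieRing L] [LieAlgebra ℝ L] [Module.Finite ℝ L]
    (hdim : Module.finrank ℝ L = 4)
    (hU : IsUnimodularLie L)
    (hdim' : Module.finrank ℝ (LieAlgebra.derivedSeries ℝ L 1) = 2) :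
    ∃ H : LieIdeal ℝ L, IsLieAbelian H ∧
      Module.finrank ℝ H + 1 = Module.finrank ℝ L := by
  obtain ⟨X, hX, hXI⟩ :
      ∃ X ∈ LieModule.ker ℝ L (derivedSeries ℝ L 1), X ∉ derivedSeries ℝ L 1 := by
    by_contra! hle
    have hker := finrank_le_finrank_ker_derivedSeries_one_add_one hU hdim'
    have hmono : finrank ℝ (LieModule.ker ℝ L (derivedSeries ℝ L 1)) ≤
        finrank ℝ (derivedSeries ℝ L 1) := Submodule.finrank_mono hle
    omega
  obtain ⟨H, hH, hfin⟩ := LieIdeal.exists_isLieAbelian_finrank_eq_add_one le_rfl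
    (isLieAbelian_derivedSeries_one_of_finrank_eq_two hU hdim') hX hXI
  exact ⟨H, hH, by omega⟩

/-- A 4-dimensional solvable unimodular real Lie algebra whose derived
algebra is 2-dimensional possesses an abelian ideal of codimension one. -/
theorem dim_four_derived_two_has_codim_one_abelian_ideal
    {L : Type*} [LieRing L] [LieAlgebra ℝ L] [Module.Finite ℝ L]
    (hdim : Module.finrank ℝ L = 4)
    [LieAlgebra.IsSolvable L] (hU : IsUnimodularLie L)
    (hdim' : Module.finrank ℝ (LieAlgebra.derivedSeries ℝ L 1) = 2) :
    ∃ H : LieIdeal ℝ L, IsLieAbelian H ∧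
      Module.finrank ℝ H + 1 = Module.finrank ℝ L :=
  dim_four_derived_two_has_codim_one_abelian_ideal_general hdim hU hdim'
end

section
/- Let 𝔤 be a 5-dimensional real Lie algebra with basis {X₁,X₂,X₃,X₄,X₅} satisfying [X₁,X₂] = 3X₂, [X₁,X₃] = −4X₃, [X₁,X₄] = −X₄, [X₁,X₅] = 2X₅, [X₂,X₃] = X₄, [X₂,X₄] = X₅, and all other brackets of basis elements zero. Then 𝔤 is solvable and unimodular, but not nilpotent. -/
/-!
`ad (b 0)` is diagonal in the basis `b`, with eigenvalues `0, 3, -4, -1, 2`. These sum to zero, so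
`ad (b 0)` is traceless; every other `b i` is an eigenvector with nonzero eigenvalue, hence a
multiple of a bracket, so `ad (b i)` is a commutator in `End L` and traceless too. An eigenvector
with nonzero eigenvalue also rules out nilpotency, since `ad` of a nilpotent Lie algebra is
nilpotent. Solvability comes from the derived series
`L ⊇ span {b 1, …, b 4} ⊇ span {b 3, b 4} ⊇ 0`, read off the bracket table.
-/

open Submodule LieAlgebra

theorem LieModule.not_isNilpotent_of_lie_eq_smul {R L M : Type*} [CommRing R] [IsDomain R]
    [LieRing L] [LieAlgebra R L] [AddCommGroup M] [Module R M] [Module.IsTorsionFree R M]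
    [LieRingModule L M] [LieModule R L M] {x : L} {m : M} {c : R} (hc : c ≠ 0) (hm : m ≠ 0)
    (h : ⁅x, m⁆ = c • m) : ¬ LieModule.IsNilpotent L M := by
  intro hM
  have hμ : (toEnd R L M x).HasEigenvalue c :=
    Module.End.hasEigenvalue_of_hasEigenvector
      (Module.End.hasEigenvector_iff.2 ⟨Module.End.mem_eigenspace_iff.2 h, hm⟩)
  exact hc (hμ.isNilpotent_of_isNilpotent (isNilpotent_toEnd_of_isNilpotent R L M x)).eq_zero

theorem LinearMap.trace_eq_sum_of_apply_eq_smul {R M ι : Type*} [CommSemiring R]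
    [AddCommMonoid M] [Module R M] [Fintype ι] [DecidableEq ι] (b : Module.Basis ι R M)
    {f : Module.End R M} {c : ι → R} (h : ∀ i, f (b i) = c i • b i) :
    trace R M f = ∑ i, c i := by
  rw [trace_eq_matrix_trace R b, Matrix.trace]
  simp [LinearMap.toMatrix_apply, h]

theorem LieAlgebra.trace_ad_eq_zero_of_lie_eq_smul {K L : Type*} [Field K] [LieRing L]
    [LieAlgebra K L] {x y : L} {c : K} (hc : c ≠ 0) (h : ⁅x, y⁆ = c • y) :
    LinearMap.trace K L (ad K L y) = 0 := by
  rw [← inv_smul_smul₀ hc y, ← h, map_smul, map_smul]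
  simp only [LieHom.map_lie, LinearMap.trace_lie, smul_zero]

theorem isUnimodularLie_of_basis {L ι : Type*} [LieRing L] [LieAlgebra ℝ L]
    (b : Module.Basis ι ℝ L) (h : ∀ i, LinearMap.trace ℝ L (ad ℝ L (b i)) = 0) :
    IsUnimodularLie L := by
  have : LinearMap.trace ℝ L ∘ₗ (ad ℝ L : L →ₗ[ℝ] Module.End ℝ L) = 0 := b.ext h
  exact fun X => LinearMap.congr_fun this X

section DerivedSeries

variable {R L : Type*} [CommRing R] [LieRing L] [LieAlgebra R L]

theorem lie_mem_of_mem_span {s t : Set L} {p : Submodule R L}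
    (h : ∀ x ∈ s, ∀ y ∈ t, ⁅x, y⁆ ∈ p) {x y : L} (hx : x ∈ span R s) (hy : y ∈ span R t) :
    ⁅x, y⁆ ∈ p := by
  have : map₂ (LieModule.toEnd R L L : L →ₗ[R] Module.End R L) (span R s) (span R t) ≤ p := by
    rw [map₂_span_span, span_le]
    rintro _ ⟨x, hx, y, hy, rfl⟩
    exact h x hx y hy
  exact map₂_le.1 this x hx y hy

theorem forall_lie_mem_image_of_lt {ι : Type*} [LinearOrder ι] {v : ι → L} {A : Set ι}
    {p : Submodule R L} (h : ∀ i ∈ A, ∀ j ∈ A, i < j → ⁅v i, v j⁆ ∈ p) :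
    ∀ x ∈ v '' A, ∀ y ∈ v '' A, ⁅x, y⁆ ∈ p := by
  rintro _ ⟨i, hi, rfl⟩ _ ⟨j, hj, rfl⟩
  rcases lt_trichotomy i j with hij | rfl | hij
  · exact h i hi j hj hij
  · rw [lie_self]; exact p.zero_mem
  · rw [← lie_skew]; exact p.neg_mem (h j hj i hi hij)

theorem LieSubmodule.mem_of_mem_lie_of_forall_mem_span {I J : LieIdeal R L} {s t : Set L}
    {p : Submodule R L} (hI : ∀ x ∈ I, x ∈ span R s) (hJ : ∀ y ∈ J, y ∈ span R t)
    (h : ∀ x ∈ s, ∀ y ∈ t, ⁅x, y⁆ ∈ p) {z : L} (hz : z ∈ ⁅I, J⁆) : z ∈ p := by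
  rw [← LieSubmodule.mem_toSubmodule, LieSubmodule.lieIdeal_oper_eq_linear_span'] at hz
  refine span_le.2 ?_ hz
  rintro _ ⟨x, hx, y, hy, rfl⟩
  exact lie_mem_of_mem_span h (hI x hx) (hJ y hy)

theorem LieAlgebra.mem_of_mem_derivedSeries_succ {k : ℕ} {s : Set L} {p : Submodule R L}
    (hk : ∀ x ∈ derivedSeries R L k, x ∈ span R s) (h : ∀ x ∈ s, ∀ y ∈ s, ⁅x, y⁆ ∈ p) {z : L}
    (hz : z ∈ derivedSeries R L (k + 1)) : z ∈ p := by
  rw [derivedSeries_def, derivedSeriesOfIdeal_succ, ← derivedSeries_def] at hz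
  exact LieSubmodule.mem_of_mem_lie_of_forall_mem_span hk hk h hz

end DerivedSeries

/-- The 5-dimensional Lie algebra of the Example is solvable and
unimodular, but not nilpotent. -/
theorem example_algebra_solvable_unimodular_not_nilpotent
    {L : Type*} [LieRing L] [LieAlgebra ℝ L]
    (b : Module.Basis (Fin 5) ℝ L)
    (h12 : ⁅b 0, b 1⁆ = (3 : ℝ) • b 1)
    (h13 : ⁅b 0, b 2⁆ = (-4 : ℝ) • b 2)
    (h14 : ⁅b 0, b 3⁆ = -b 3)
    (h15 : ⁅b 0, b 4⁆ = (2 : ℝ) • b 4)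
    (h23 : ⁅b 1, b 2⁆ = b 3)
    (h24 : ⁅b 1, b 3⁆ = b 4)
    (h25 : ⁅b 1, b 4⁆ = 0)
    (h34 : ⁅b 2, b 3⁆ = 0)
    (h35 : ⁅b 2, b 4⁆ = 0)
    (h45 : ⁅b 3, b 4⁆ = 0)
    : LieAlgebra.IsSolvable L ∧ IsUnimodularLie L ∧ ¬ LieRing.IsNilpotent L := by
  have hb_mem : ∀ {i : Fin 5} {A : Set (Fin 5)}, i ∈ A → b i ∈ span ℝ (b '' A) :=
    fun hi => subset_span (Set.mem_image_of_mem b hi)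
  have hD1 : ∀ x ∈ derivedSeries ℝ L 1, x ∈ span ℝ (b '' Set.Ici 1) :=
    fun _ => mem_of_mem_derivedSeries_succ (s := b '' Set.univ) (by simp [b.span_eq])
      (forall_lie_mem_image_of_lt fun i _ j _ hij => by
        fin_cases i <;> fin_cases j <;> simp at hij <;>
          simp [h12, h13, h14, h15, h23, h24, h25, h34, h35, h45, smul_mem, hb_mem])
  have hD2 : ∀ x ∈ derivedSeries ℝ L 2, x ∈ span ℝ (b '' Set.Ici 3) :=
    fun _ => mem_of_mem_derivedSeries_succ hD1
      (forall_lie_mem_image_of_lt fun i hi j _ hij => by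
        fin_cases i <;> fin_cases j <;> simp at hi hij <;>
          simp [h23, h24, h25, h34, h35, h45, hb_mem])
  have hD3 : ∀ x ∈ derivedSeries ℝ L 3, x ∈ (⊥ : Submodule ℝ L) :=
    fun _ => mem_of_mem_derivedSeries_succ hD2
      (forall_lie_mem_image_of_lt fun i hi j _ hij => by
        fin_cases i <;> fin_cases j <;> simp at hi hij
        simp [h45])
  have eigen : ∀ i, ⁅b 0, b i⁆ = (![0, 3, -4, -1, 2] : Fin 5 → ℝ) i • b i := by
    intro i
    fin_cases i <;> simp [h12, h13, h14, h15]
  refine ⟨IsSolvable.mk (R := ℝ) (k := 3) ((LieSubmodule.eq_bot_iff _).2 hD3),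
    isUnimodularLie_of_basis b fun i => ?_,
    LieModule.not_isNilpotent_of_lie_eq_smul three_ne_zero (b.ne_zero 1) h12⟩
  by_cases hi : i = 0
  · subst hi
    rw [LinearMap.trace_eq_sum_of_apply_eq_smul b eigen]
    norm_num [Fin.sum_univ_succ]
  · exact trace_ad_eq_zero_of_lie_eq_smul (by fin_cases i <;> simp at hi ⊢) (eigen i)
end

section
/- Let 𝔤 be a 5-dimensional real Lie algebra with basis {X₁,X₂,X₃,X₄,X₅} satisfying [X₁,X₂] = 3X₂, [X₁,X₃] = −4X₃, [X₁,X₄] = −X₄, [X₁,X₅] = 2X₅, [X₂,X₃] = X₄, [X₂,X₄] = X₅, and all other brackets of basis elements zero. Then for every inner product on 𝔤 there is no orthonormal basis of 𝔤 comprised of geodesic vectors. -/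
/-!
Write `yⱼ(v)` for the `b`-coordinates of `v` and `gⱼ(v) = B (b j) v`. The geodesic equations
`B ⁅b j, v⁆ v = 0` for `j = 0, …, 4` leave a geodesic unit vector only two possibilities:
`y₁ g₁ = 0`, or `y₁ g₁ = 4/7`. For an orthonormal basis `c`, however, `∑ᵢ y₁(cᵢ) g₁(cᵢ)` is the
trace of the projection `v ↦ y₁(v) • b 1`, which is `1`, and `1` is not a multiple of `4/7`.
-/

theorem Finset.exists_nat_sum_eq_mul_of_forall_eq_zero_or_eq {ι : Type*} (s : Finset ι)
    {x : ι → ℝ} {a : ℝ} (h : ∀ i ∈ s, x i = 0 ∨ x i = a) : ∃ n : ℕ, ∑ i ∈ s, x i = n * a := by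
  refine ⟨{i ∈ s | x i ≠ 0}.card, ?_⟩
  rw [← Finset.sum_filter_ne_zero, Finset.sum_congr rfl fun i hi => ?_, Finset.sum_const,
    nsmul_eq_mul]
  obtain ⟨his, hi0⟩ := Finset.mem_filter.mp hi
  exact (h i his).resolve_left hi0

section Orthonormal

variable {L : Type*} [AddCommGroup L] [Module ℝ L]

theorem Module.Basis.sum_repr_mul_apply_left {κ : Type*} [Fintype κ] (b : Module.Basis κ ℝ L)
    (B : L →ₗ[ℝ] L →ₗ[ℝ] ℝ) (v w : L) : ∑ l, b.repr v l * B (b l) w = B v w := by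
  conv_rhs => rw [← b.sum_repr v]
  simp only [map_sum, map_smul, LinearMap.sum_apply, LinearMap.smul_apply, smul_eq_mul]

variable {B : L →ₗ[ℝ] L →ₗ[ℝ] ℝ} {ι : Type*} [Fintype ι] [DecidableEq ι]
  {c : Module.Basis ι ℝ L}

theorem IsOrthonormalFamily.repr_apply (hc : IsOrthonormalFamily B c) (v : L) (i : ι) :
    c.repr v i = B v (c i) := by
  rw [← c.sum_repr_mul_apply_left B v (c i)]
  simp [hc _ i]

theorem IsOrthonormalFamily.sum_repr_mul_apply (hc : IsOrthonormalFamily B c) {κ : Type*}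
    (b : Module.Basis κ ℝ L) (v : L) (j : κ) :
    ∑ i, b.repr (c i) j * B v (c i) = b.repr v j := by
  conv_rhs => rw [← c.sum_repr v]
  simp [hc.repr_apply, mul_comm]

end Orthonormal

section Example

variable {L : Type*} [LieRing L] [LieAlgebra ℝ L]

theorem sum_repr_mul_lie_eq_zero {κ : Type*} [Fintype κ] (b : Module.Basis κ ℝ L)
    {B : L →ₗ[ℝ] L →ₗ[ℝ] ℝ} {v : L} (hv : ∀ X : L, B ⁅X, v⁆ v = 0) (X : L) :
    ∑ l, b.repr v l * B ⁅X, b l⁆ v = 0 := by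
  calc ∑ l, b.repr v l * B ⁅X, b l⁆ v = B ⁅X, ∑ l, b.repr v l • b l⁆ v := by
        simp only [lie_sum, lie_smul, map_sum, map_smul, LinearMap.sum_apply,
          LinearMap.smul_apply, smul_eq_mul]
    _ = 0 := by rw [b.sum_repr]; exact hv X

structure IsExampleBasis (b : Module.Basis (Fin 5) ℝ L) : Prop where
  lie_zero_one : ⁅b 0, b 1⁆ = (3 : ℝ) • b 1
  lie_zero_two : ⁅b 0, b 2⁆ = (-4 : ℝ) • b 2
  lie_zero_three : ⁅b 0, b 3⁆ = -b 3
  lie_zero_four : ⁅b 0, b 4⁆ = (2 : ℝ) • b 4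
  lie_one_two : ⁅b 1, b 2⁆ = b 3
  lie_one_three : ⁅b 1, b 3⁆ = b 4
  lie_one_four : ⁅b 1, b 4⁆ = 0
  lie_two_three : ⁅b 2, b 3⁆ = 0
  lie_two_four : ⁅b 2, b 4⁆ = 0
  lie_three_four : ⁅b 3, b 4⁆ = 0

namespace IsExampleBasis

variable {b : Module.Basis (Fin 5) ℝ L} {B : L →ₗ[ℝ] L →ₗ[ℝ] ℝ} {v : L}

theorem geodesic_equations (hb : IsExampleBasis b) (hv : ∀ X : L, B ⁅X, v⁆ v = 0) :
    3 * b.repr v 1 * B (b 1) v - 4 * b.repr v 2 * B (b 2) v - b.repr v 3 * B (b 3) v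
        + 2 * b.repr v 4 * B (b 4) v = 0 ∧
      -3 * b.repr v 0 * B (b 1) v + b.repr v 2 * B (b 3) v + b.repr v 3 * B (b 4) v = 0 ∧
      4 * b.repr v 0 * B (b 2) v - b.repr v 1 * B (b 3) v = 0 ∧
      b.repr v 0 * B (b 3) v - b.repr v 1 * B (b 4) v = 0 ∧
      b.repr v 0 * B (b 4) v = 0 := by
  have h0 := sum_repr_mul_lie_eq_zero b hv (b 0)
  have h1 := sum_repr_mul_lie_eq_zero b hv (b 1)
  have h2 := sum_repr_mul_lie_eq_zero b hv (b 2)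
  have h3 := sum_repr_mul_lie_eq_zero b hv (b 3)
  have h4 := sum_repr_mul_lie_eq_zero b hv (b 4)
  simp only [Fin.sum_univ_five, lie_self, ← lie_skew (b 1) (b 0), ← lie_skew (b 2) (b 0),
    ← lie_skew (b 3) (b 0), ← lie_skew (b 4) (b 0), ← lie_skew (b 2) (b 1),
    ← lie_skew (b 3) (b 1), ← lie_skew (b 4) (b 1), ← lie_skew (b 3) (b 2),
    ← lie_skew (b 4) (b 2), ← lie_skew (b 4) (b 3), hb.lie_zero_one, hb.lie_zero_two,
    hb.lie_zero_three, hb.lie_zero_four, hb.lie_one_two, hb.lie_one_three, hb.lie_one_four,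
    hb.lie_two_three, hb.lie_two_four, hb.lie_three_four, map_neg, map_smul, map_zero,
    LinearMap.neg_apply, LinearMap.smul_apply, LinearMap.zero_apply, smul_eq_mul] at h0 h1 h2 h3 h4
  exact ⟨by linear_combination h0, by linear_combination h1, by linear_combination h2,
    by linear_combination h3, by linear_combination -h4 / 2⟩

theorem repr_one_mul_apply_eq_zero_or_eq (hb : IsExampleBasis b) (hv : ∀ X : L, B ⁅X, v⁆ v = 0)
    (hvv : B v v = 1) :
    b.repr v 1 * B (b 1) v = 0 ∨ b.repr v 1 * B (b 1) v = 4 / 7 := by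
  obtain ⟨E0, E1, E2, E3, E4⟩ := hb.geodesic_equations hv
  have hunit := b.sum_repr_mul_apply_left B v v
  rw [Fin.sum_univ_five, hvv] at hunit
  by_cases h0 : b.repr v 0 = 0
  · by_cases h1 : b.repr v 1 = 0
    · exact Or.inl (by rw [h1, zero_mul])
    have g3 : B (b 3) v = 0 := by simpa [h0, h1] using E2
    have g4 : B (b 4) v = 0 := by simpa [h0, h1] using E3
    rw [h0, g3, g4] at hunit
    rw [g3, g4] at E0
    exact Or.inr (by linear_combination (4 * hunit + E0) / 7)
  · have g4 : B (b 4) v = 0 := by simpa [h0] using E4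
    have g3 : B (b 3) v = 0 := by simpa [h0, g4] using E3
    have g1 : B (b 1) v = 0 := by simpa [h0, g3, g4] using E1
    exact Or.inl (by rw [g1, mul_zero])

end IsExampleBasis

end Example

/-- The 5-dimensional Lie algebra of the Example has no orthonormal
basis of geodesic vectors, for any inner product. -/
theorem example_algebra_no_orthonormal_geodesic_basis
    {L : Type*} [LieRing L] [LieAlgebra ℝ L]
    (b : Module.Basis (Fin 5) ℝ L)
    (h12 : ⁅b 0, b 1⁆ = (3 : ℝ) • b 1)
    (h13 : ⁅b 0, b 2⁆ = (-4 : ℝ) • b 2)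
    (h14 : ⁅b 0, b 3⁆ = -b 3)
    (h15 : ⁅b 0, b 4⁆ = (2 : ℝ) • b 4)
    (h23 : ⁅b 1, b 2⁆ = b 3)
    (h24 : ⁅b 1, b 3⁆ = b 4)
    (h25 : ⁅b 1, b 4⁆ = 0)
    (h34 : ⁅b 2, b 3⁆ = 0)
    (h35 : ⁅b 2, b 4⁆ = 0)
    (h45 : ⁅b 3, b 4⁆ = 0)
    : ∀ B : L →ₗ[ℝ] L →ₗ[ℝ] ℝ, IsInnerProduct B →
      ¬ ∃ c : Module.Basis (Fin 5) ℝ L,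
          IsOrthonormalFamily B c ∧ ∀ i, IsGeodesicVector B (c i) := by
  rintro B - ⟨c, hc, hgeo⟩
  have hb : IsExampleBasis b := ⟨h12, h13, h14, h15, h23, h24, h25, h34, h35, h45⟩
  have htrace := hc.sum_repr_mul_apply b (b 1) 1
  rw [b.repr_self, Finsupp.single_eq_same] at htrace
  obtain ⟨n, hn⟩ := Finset.univ.exists_nat_sum_eq_mul_of_forall_eq_zero_or_eq fun i _ =>
    hb.repr_one_mul_apply_eq_zero_or_eq (hgeo i).2 (by simpa using hc i i)
  have h4n : 4 * n = 7 := by exact_mod_cast (by linarith : (4 * n : ℝ) = 7)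
  omega
end

section
/- Let 𝔤 be a 5-dimensional real Lie algebra with basis {X₁,X₂,X₃,X₄,X₅} satisfying [X₁,X₂] = 3X₂, [X₁,X₃] = −4X₃, [X₁,X₄] = −X₄, [X₁,X₅] = 2X₅, [X₂,X₃] = X₄, [X₂,X₄] = X₅, and all other brackets of basis elements zero. Then for every inner product on 𝔤, no geodesic vector lies in the subspace span(X₄,X₅). -/
/-! A geodesic vector `Y` is `B`-orthogonal to every `⁅X, Y⁆`, so it can never be of the form
`⁅X, Y⁆`. For `Y = a X₄ + c X₅`, however, `ad X₁` acts on `span(X₄, X₅)` with eigenvalues `-1, 2`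
and `ad X₂` sends `X₄` to `X₅`, so some combination of `X₁` and `X₂` maps `Y` to itself. -/

theorem IsGeodesicVector.lie_ne_self {L : Type*} [LieRing L] [LieAlgebra ℝ L]
    {B : L →ₗ[ℝ] L →ₗ[ℝ] ℝ} {Y : L} (hB : IsInnerProduct B) (hY : IsGeodesicVector B Y)
    (X : L) : ⁅X, Y⁆ ≠ Y := by
  intro hXY
  have hYY : B Y Y = 0 := by simpa only [hXY] using hY.2 X
  exact (hB.posdef Y hY.1).ne' hYY

theorem exists_lie_eq_self_of_mem_span_pair {L : Type*} [LieRing L] [LieAlgebra ℝ L]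
    {X₁ X₂ U V : L} (h₁U : ⁅X₁, U⁆ = -U) (h₁V : ⁅X₁, V⁆ = (2 : ℝ) • V)
    (h₂U : ⁅X₂, U⁆ = V) (h₂V : ⁅X₂, V⁆ = 0) {Y : L} (hY : Y ∈ Submodule.span ℝ {U, V}) :
    ∃ X : L, ⁅X, Y⁆ = Y := by
  obtain ⟨a, c, rfl⟩ := Submodule.mem_span_pair.mp hY
  by_cases ha : a = 0
  · refine ⟨(1 / 2 : ℝ) • X₁, ?_⟩
    simp only [ha, zero_smul, zero_add, smul_lie, lie_smul, h₁V]
    module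
  · refine ⟨-X₁ + (3 * c / a) • X₂, ?_⟩
    have hcancel : a * (3 * c / a) = 3 * c := by field_simp
    simp only [add_lie, neg_lie, smul_lie, lie_add, lie_smul, h₁U, h₁V, h₂U, h₂V]
    linear_combination (norm := module) hcancel • V

theorem example_algebra_no_geodesic_in_span_X4_X5_general
    {L : Type*} [LieRing L] [LieAlgebra ℝ L]
    (b : Module.Basis (Fin 5) ℝ L)
    (h14 : ⁅b 0, b 3⁆ = -b 3)
    (h15 : ⁅b 0, b 4⁆ = (2 : ℝ) • b 4)
    (h24 : ⁅b 1, b 3⁆ = b 4)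
    (h25 : ⁅b 1, b 4⁆ = 0)
    : ∀ B : L →ₗ[ℝ] L →ₗ[ℝ] ℝ, IsInnerProduct B →
      ∀ Y ∈ Submodule.span ℝ {b 3, b 4}, ¬ IsGeodesicVector B Y := by
  intro B hB Y hY hgeo
  obtain ⟨X, hXY⟩ := exists_lie_eq_self_of_mem_span_pair h14 h15 h24 h25 hY
  exact hgeo.lie_ne_self hB X hXY

/-- In the Example algebra, for every inner product, no geodesic vector
lies in `span(X₄, X₅)`. -/
theorem example_algebra_no_geodesic_in_span_X4_X5
    {L : Type*} [LieRing L] [LieAlgebra ℝ L]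
    (b : Module.Basis (Fin 5) ℝ L)
    (h12 : ⁅b 0, b 1⁆ = (3 : ℝ) • b 1)
    (h13 : ⁅b 0, b 2⁆ = (-4 : ℝ) • b 2)
    (h14 : ⁅b 0, b 3⁆ = -b 3)
    (h15 : ⁅b 0, b 4⁆ = (2 : ℝ) • b 4)
    (h23 : ⁅b 1, b 2⁆ = b 3)
    (h24 : ⁅b 1, b 3⁆ = b 4)
    (h25 : ⁅b 1, b 4⁆ = 0)
    (h34 : ⁅b 2, b 3⁆ = 0)
    (h35 : ⁅b 2, b 4⁆ = 0)
    (h45 : ⁅b 3, b 4⁆ = 0)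
    : ∀ B : L →ₗ[ℝ] L →ₗ[ℝ] ℝ, IsInnerProduct B →
      ∀ Y ∈ Submodule.span ℝ {b 3, b 4}, ¬ IsGeodesicVector B Y :=
  example_algebra_no_geodesic_in_span_X4_X5_general b h14 h15 h24 h25
end

section
/- Let 𝔤 be a 5-dimensional real Lie algebra with basis {X₁,X₂,X₃,X₄,X₅} satisfying [X₁,X₂] = 3X₂, [X₁,X₃] = −4X₃, [X₁,X₄] = −X₄, [X₁,X₅] = 2X₅, [X₂,X₃] = X₄, [X₂,X₄] = X₅, and all other brackets of basis elements zero, equipped with any inner product. Then a vector Y ∈ 𝔤 not lying in the derived algebra 𝔤' = span(X₂,X₃,X₄,X₅) is a geodesic vector if and only if Y ≠ 0 and Y is orthogonal to 𝔤'; in particular, up to a nonzero scalar multiple there is exactly one geodesic vector not lying in 𝔤'. -/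
open Module
open LinearMap (BilinForm)

theorem lie_mem_of_basis_of_lt {R L ι : Type*} [CommRing R] [LieRing L] [LieAlgebra R L]
    [LinearOrder ι] (b : Basis ι R L) (S : Submodule R L)
    (h : ∀ i j, i < j → ⁅b i, b j⁆ ∈ S) (X Y : L) : ⁅X, Y⁆ ∈ S := by
  let bracketModS : L →ₗ[R] L →ₗ[R] L ⧸ S :=
    (LinearMap.mk₂ R (⁅·, ·⁆) add_lie smul_lie lie_add lie_smul).compr₂ S.mkQ
  have hzero : bracketModS = 0 := LinearMap.ext_basis b b fun i j => by
    suffices ⁅b i, b j⁆ ∈ S by simpa [bracketModS]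
    rcases lt_trichotomy i j with hij | rfl | hij
    · exact h i j hij
    · simp
    · rw [← lie_skew]; exact S.neg_mem (h j i hij)
  simpa [bracketModS] using congr($hzero X Y)

theorem IsGeodesicVector.of_mem_orthogonal {L : Type*} [LieRing L] [LieAlgebra ℝ L]
    {B : BilinForm ℝ L} {S : Submodule ℝ L} (hS : ∀ X Y : L, ⁅X, Y⁆ ∈ S) {Y : L}
    (hY : Y ≠ 0) (hYS : Y ∈ B.orthogonal S) : IsGeodesicVector B Y :=
  ⟨hY, fun X => hYS _ (hS X Y)⟩

theorem IsGeodesicVector.apply_eq_zero_of_lie_eq_smul_add {L : Type*} [LieRing L]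
    [LieAlgebra ℝ L] {B : BilinForm ℝ L} {X Y w : L} {c : ℝ} (hY : IsGeodesicVector B Y)
    (hc : c ≠ 0) (hXY : ⁅Y, X⁆ = c • X + w) (hw : B w Y = 0) : B X Y = 0 := by
  have h := hY.2 X
  rw [← lie_skew, hXY] at h
  simpa [hw, hc] using h

namespace IsInnerProduct

variable {L : Type*} [AddCommGroup L] [Module ℝ L] {B : BilinForm ℝ L}

theorem mem_orthogonal_iff (hB : IsInnerProduct B) {S : Submodule ℝ L} {Y : L} :
    Y ∈ B.orthogonal S ↔ ∀ v ∈ S, B Y v = 0 := by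
  simp only [BilinForm.mem_orthogonal_iff, hB.symm Y]

theorem isCompl_orthogonal [FiniteDimensional ℝ L] (hB : IsInnerProduct B) (S : Submodule ℝ L) :
    IsCompl S (B.orthogonal S) := by
  refine (BilinForm.isCompl_orthogonal_iff_disjoint fun x y h => by rwa [hB.symm]).2 ?_
  refine Submodule.disjoint_def.2 fun x hxS hxK => ?_
  by_contra hx
  exact (hB.posdef x hx).ne' (hxK x hxS)

theorem finrank_orthogonal_eq_one [FiniteDimensional ℝ L] (hB : IsInnerProduct B)
    {S : Submodule ℝ L} (hS : finrank ℝ S + 1 = finrank ℝ L) :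
    finrank ℝ (B.orthogonal S) = 1 := by
  have := Submodule.finrank_add_eq_of_isCompl (hB.isCompl_orthogonal S)
  omega

end IsInnerProduct

theorem Submodule.exists_smul_eq_of_finrank_eq_one {K V : Type*} [DivisionRing K]
    [AddCommGroup V] [Module K V] {W : Submodule K V} (hW : finrank K W = 1) {x y : V}
    (hx : x ∈ W) (hx0 : x ≠ 0) (hy : y ∈ W) : ∃ c : K, c • x = y := by
  obtain ⟨c, hc⟩ := (finrank_eq_one_iff_of_nonzero' ⟨x, hx⟩ (by simpa using hx0)).1 hW ⟨y, hy⟩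
  exact ⟨c, congr($hc.1)⟩

theorem Module.Basis.span_one_two_three_four_eq_ker_coord {R M : Type*} [Semiring R]
    [AddCommMonoid M] [Module R M] (b : Basis (Fin 5) R M) :
    Submodule.span R {b 1, b 2, b 3, b 4} = LinearMap.ker (b.coord 0) := by
  have himage : ({b 1, b 2, b 3, b 4} : Set M) = b '' {0}ᶜ := by
    rw [show ({0}ᶜ : Set (Fin 5)) = {1, 2, 3, 4} by ext i; fin_cases i <;> simp]
    simp [Set.image_insert_eq]
  ext x
  simp [himage, b.mem_span_image, Set.subset_compl_singleton_iff]

theorem Module.Basis.finrank_span_one_two_three_four_add_one {K V : Type*} [DivisionRing K]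
    [AddCommGroup V] [Module K V] (b : Basis (Fin 5) K V) :
    finrank K (Submodule.span K {b 1, b 2, b 3, b 4}) + 1 = finrank K V := by
  have := b.finiteDimensional_of_finite
  rw [b.span_one_two_three_four_eq_ker_coord]
  exact Module.Dual.finrank_ker_add_one_of_ne_zero (DFunLike.ne_iff.2 ⟨b 0, by simp⟩)

section ExampleAlgebra

variable {L : Type*} [LieRing L] [LieAlgebra ℝ L]

structure IsExampleBasis_s14 (b : Basis (Fin 5) ℝ L) : Prop where
  lie_0_1 : ⁅b 0, b 1⁆ = (3 : ℝ) • b 1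
  lie_0_2 : ⁅b 0, b 2⁆ = (-4 : ℝ) • b 2
  lie_0_3 : ⁅b 0, b 3⁆ = -b 3
  lie_0_4 : ⁅b 0, b 4⁆ = (2 : ℝ) • b 4
  lie_1_2 : ⁅b 1, b 2⁆ = b 3
  lie_1_3 : ⁅b 1, b 3⁆ = b 4
  lie_1_4 : ⁅b 1, b 4⁆ = 0
  lie_2_3 : ⁅b 2, b 3⁆ = 0
  lie_2_4 : ⁅b 2, b 4⁆ = 0
  lie_3_4 : ⁅b 3, b 4⁆ = 0

namespace IsExampleBasis_s14

variable {b : Basis (Fin 5) ℝ L}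

theorem lie_mem_span (hb : IsExampleBasis_s14 b) (X Y : L) :
    ⁅X, Y⁆ ∈ Submodule.span ℝ {b 1, b 2, b 3, b 4} := by
  refine lie_mem_of_basis_of_lt b _ (fun i j hij => ?_) X Y
  rw [b.span_one_two_three_four_eq_ker_coord, LinearMap.mem_ker]
  fin_cases i <;> fin_cases j <;> first
    | exact absurd hij (by decide)
    | simp [hb.lie_0_1, hb.lie_0_2, hb.lie_0_3, hb.lie_0_4, hb.lie_1_2, hb.lie_1_3, hb.lie_1_4,
        hb.lie_2_3, hb.lie_2_4, hb.lie_3_4]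

theorem mem_orthogonal_of_isGeodesicVector (hb : IsExampleBasis_s14 b) {B : BilinForm ℝ L} {Y : L}
    (hY : IsGeodesicVector B Y) (hY0 : b.repr Y 0 ≠ 0) :
    Y ∈ B.orthogonal (Submodule.span ℝ {b 1, b 2, b 3, b 4}) := by
  have hlie : ∀ k, ⁅Y, b k⁆ = ∑ j, b.repr Y j • ⁅b j, b k⁆ := fun k => by
    conv_lhs => rw [← b.sum_repr Y]
    simp only [sum_lie, smul_lie]
  set y := b.repr Y
  have lie4 : ⁅Y, b 4⁆ = (2 * y 0) • b 4 + 0 := by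
    simp only [hlie, Fin.sum_univ_five, hb.lie_0_4, hb.lie_1_4, hb.lie_2_4, hb.lie_3_4, lie_self]
    module
  have lie3 : ⁅Y, b 3⁆ = (-y 0) • b 3 + y 1 • b 4 := by
    simp only [hlie, Fin.sum_univ_five, hb.lie_0_3, hb.lie_1_3, hb.lie_2_3, ← lie_skew (b 4),
      hb.lie_3_4, lie_self]
    module
  have lie2 : ⁅Y, b 2⁆ = (-4 * y 0) • b 2 + y 1 • b 3 := by
    simp only [hlie, Fin.sum_univ_five, hb.lie_0_2, hb.lie_1_2, ← lie_skew (b 3), ← lie_skew (b 4),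
      hb.lie_2_3, hb.lie_2_4, lie_self]
    module
  have lie1 : ⁅Y, b 1⁆ = (3 * y 0) • b 1 + (-y 2 • b 3 - y 3 • b 4) := by
    simp only [hlie, Fin.sum_univ_five, hb.lie_0_1, ← lie_skew (b 2), ← lie_skew (b 3),
      ← lie_skew (b 4), hb.lie_1_2, hb.lie_1_3, hb.lie_1_4, lie_self]
    module
  have perp4 : B (b 4) Y = 0 :=
    hY.apply_eq_zero_of_lie_eq_smul_add (mul_ne_zero two_ne_zero hY0) lie4 (B.map_zero₂ Y)
  have perp3 : B (b 3) Y = 0 :=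
    hY.apply_eq_zero_of_lie_eq_smul_add (neg_ne_zero.2 hY0) lie3 (by simp [perp4])
  have perp2 : B (b 2) Y = 0 :=
    hY.apply_eq_zero_of_lie_eq_smul_add (by simpa using hY0) lie2 (by simp [perp3])
  have perp1 : B (b 1) Y = 0 :=
    hY.apply_eq_zero_of_lie_eq_smul_add (by simpa using hY0) lie1 (by simp [perp3, perp4])
  intro v hv
  refine (Submodule.span_le (p := LinearMap.ker (B.flip Y))).2 ?_ hv
  simp [Set.insert_subset_iff, perp1, perp2, perp3, perp4]

theorem isGeodesicVector_iff (hb : IsExampleBasis_s14 b) {B : BilinForm ℝ L} {Y : L}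
    (hYS : Y ∉ Submodule.span ℝ {b 1, b 2, b 3, b 4}) :
    IsGeodesicVector B Y ↔ Y ≠ 0 ∧ Y ∈ B.orthogonal (Submodule.span ℝ {b 1, b 2, b 3, b 4}) := by
  refine ⟨fun hY => ⟨hY.1, hb.mem_orthogonal_of_isGeodesicVector hY ?_⟩,
    fun h => .of_mem_orthogonal hb.lie_mem_span h.1 h.2⟩
  simpa [b.span_one_two_three_four_eq_ker_coord] using hYS

end IsExampleBasis_s14

end ExampleAlgebra

/-- In the Example algebra with any inner product, a vector not lying in
the derived algebra `span(X₂,X₃,X₄,X₅)` is geodesic iff it is nonzero and orthogonal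
to the derived algebra; in particular there is, up to nonzero scalar, exactly one
geodesic vector outside the derived algebra. -/
theorem example_algebra_geodesics_outside_derived
    {L : Type*} [LieRing L] [LieAlgebra ℝ L]
    (b : Module.Basis (Fin 5) ℝ L)
    (h12 : ⁅b 0, b 1⁆ = (3 : ℝ) • b 1)
    (h13 : ⁅b 0, b 2⁆ = (-4 : ℝ) • b 2)
    (h14 : ⁅b 0, b 3⁆ = -b 3)
    (h15 : ⁅b 0, b 4⁆ = (2 : ℝ) • b 4)
    (h23 : ⁅b 1, b 2⁆ = b 3)
    (h24 : ⁅b 1, b 3⁆ = b 4)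
    (h25 : ⁅b 1, b 4⁆ = 0)
    (h34 : ⁅b 2, b 3⁆ = 0)
    (h35 : ⁅b 2, b 4⁆ = 0)
    (h45 : ⁅b 3, b 4⁆ = 0)
    : ∀ B : L →ₗ[ℝ] L →ₗ[ℝ] ℝ, IsInnerProduct B →
      (∀ Y : L, Y ∉ Submodule.span ℝ {b 1, b 2, b 3, b 4} →
        (IsGeodesicVector B Y ↔
          (Y ≠ 0 ∧ ∀ v ∈ Submodule.span ℝ {b 1, b 2, b 3, b 4}, B Y v = 0))) ∧
      (∃ Y : L, Y ∉ Submodule.span ℝ {b 1, b 2, b 3, b 4} ∧ IsGeodesicVector B Y) ∧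
      (∀ Y Z : L, Y ∉ Submodule.span ℝ {b 1, b 2, b 3, b 4} →
        Z ∉ Submodule.span ℝ {b 1, b 2, b 3, b 4} →
        IsGeodesicVector B Y → IsGeodesicVector B Z →
        ∃ c : ℝ, c ≠ 0 ∧ Z = c • Y) := by
  intro B hB
  have hb : IsExampleBasis_s14 b := ⟨h12, h13, h14, h15, h23, h24, h25, h34, h35, h45⟩
  have := b.finiteDimensional_of_finite
  set S := Submodule.span ℝ {b 1, b 2, b 3, b 4}
  have hK : finrank ℝ (BilinForm.orthogonal B S) = 1 :=
    hB.finrank_orthogonal_eq_one b.finrank_span_one_two_three_four_add_one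
  refine ⟨fun Y hYS => by rw [hb.isGeodesicVector_iff hYS, hB.mem_orthogonal_iff], ?_, ?_⟩
  · obtain ⟨Y, hYK, hY0⟩ := Submodule.exists_mem_ne_zero_of_ne_bot
      (Submodule.one_le_finrank_iff.1 hK.ge)
    have hYS : Y ∉ S := fun hYS =>
      hY0 (Submodule.disjoint_def.1 (hB.isCompl_orthogonal S).disjoint Y hYS hYK)
    exact ⟨Y, hYS, (hb.isGeodesicVector_iff hYS).2 ⟨hY0, hYK⟩⟩
  · intro Y Z hYS hZS hY hZ
    obtain ⟨hY0, hYK⟩ := (hb.isGeodesicVector_iff hYS).1 hY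
    obtain ⟨hZ0, hZK⟩ := (hb.isGeodesicVector_iff hZS).1 hZ
    obtain ⟨c, rfl⟩ := Submodule.exists_smul_eq_of_finrank_eq_one hK hYK hY0 hZK
    exact ⟨c, left_ne_zero_of_smul hZ0, rfl⟩
end

section
/- Let 𝔤 be a 5-dimensional real Lie algebra with basis {X₁,X₂,X₃,X₄,X₅} satisfying [X₁,X₂] = 3X₂, [X₁,X₃] = −4X₃, [X₁,X₄] = −X₄, [X₁,X₅] = 2X₅, [X₂,X₃] = X₄, [X₂,X₄] = X₅, and all other brackets of basis elements zero, equipped with any inner product. If Y = a₂X₂ + a₃X₃ + a₄X₄ + a₅X₅ with a₂ ≠ 0 is a geodesic vector, then Y is orthogonal to span(X₄,X₅). -/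
theorem IsGeodesicVector.apply_eq_zero_of_lie_eq_smul {L : Type*} [LieRing L] [LieAlgebra ℝ L]
    {B : L →ₗ[ℝ] L →ₗ[ℝ] ℝ} {Y : L} (hY : IsGeodesicVector B Y) {X Z : L}
    {c : ℝ} (hc : c ≠ 0) (h : ⁅X, Y⁆ = c • Z) : B Z Y = 0 := by
  have hXY := hY.2 X
  rw [h, map_smul, LinearMap.smul_apply, smul_eq_mul] at hXY
  exact (mul_eq_zero.mp hXY).resolve_left hc

theorem IsInnerProduct.apply_eq_zero_of_mem_span {L : Type*} [AddCommGroup L] [Module ℝ L]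
    {B : L →ₗ[ℝ] L →ₗ[ℝ] ℝ} (hB : IsInnerProduct B) {Y : L} {s : Set L}
    (hs : ∀ z ∈ s, B z Y = 0) {v : L} (hv : v ∈ Submodule.span ℝ s) : B Y v = 0 :=
  (Submodule.span_le (p := LinearMap.ker (B Y))).mpr
    (fun z hz => (hB.symm Y z).trans (hs z hz)) hv

theorem example_algebra_geodesic_in_V2_orthogonal_V4_general
    {L : Type*} [LieRing L] [LieAlgebra ℝ L]
    (b : Module.Basis (Fin 5) ℝ L)
    (h23 : ⁅b 1, b 2⁆ = b 3)
    (h24 : ⁅b 1, b 3⁆ = b 4)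
    (h34 : ⁅b 2, b 3⁆ = 0)
    (h35 : ⁅b 2, b 4⁆ = 0)
    (h45 : ⁅b 3, b 4⁆ = 0)
    : ∀ B : L →ₗ[ℝ] L →ₗ[ℝ] ℝ, IsInnerProduct B →
      ∀ a₂ a₃ a₄ a₅ : ℝ, a₂ ≠ 0 →
        IsGeodesicVector B (a₂ • b 1 + a₃ • b 2 + a₄ • b 3 + a₅ • b 4) →
        ∀ v ∈ Submodule.span ℝ {b 3, b 4},
          B (a₂ • b 1 + a₃ • b 2 + a₄ • b 3 + a₅ • b 4) v = 0 := by
  intro B hB a₂ a₃ a₄ a₅ ha hG v hv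
  have h32 : ⁅b 3, b 2⁆ = 0 := by rw [← lie_skew, h34, neg_zero]
  have lie_X₃ : ⁅b 2, a₂ • b 1 + a₃ • b 2 + a₄ • b 3 + a₅ • b 4⁆ = (-a₂) • b 3 := by
    simp [← lie_skew (b 2) (b 1), h23, h34, h35]
  have lie_X₄ : ⁅b 3, a₂ • b 1 + a₃ • b 2 + a₄ • b 3 + a₅ • b 4⁆ = (-a₂) • b 4 := by
    simp [← lie_skew (b 3) (b 1), h24, h32, h45]
  refine hB.apply_eq_zero_of_mem_span ?_ hv
  rintro z (rfl | rfl)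
  · exact hG.apply_eq_zero_of_lie_eq_smul (neg_ne_zero.mpr ha) lie_X₃
  · exact hG.apply_eq_zero_of_lie_eq_smul (neg_ne_zero.mpr ha) lie_X₄

/-- In the Example algebra with any inner product, a geodesic vector
`Y = a₂X₂ + a₃X₃ + a₄X₄ + a₅X₅` with `a₂ ≠ 0` is orthogonal to `span(X₄,X₅)`. -/
theorem example_algebra_geodesic_in_V2_orthogonal_V4
    {L : Type*} [LieRing L] [LieAlgebra ℝ L]
    (b : Module.Basis (Fin 5) ℝ L)
    (h12 : ⁅b 0, b 1⁆ = (3 : ℝ) • b 1)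
    (h13 : ⁅b 0, b 2⁆ = (-4 : ℝ) • b 2)
    (h14 : ⁅b 0, b 3⁆ = -b 3)
    (h15 : ⁅b 0, b 4⁆ = (2 : ℝ) • b 4)
    (h23 : ⁅b 1, b 2⁆ = b 3)
    (h24 : ⁅b 1, b 3⁆ = b 4)
    (h25 : ⁅b 1, b 4⁆ = 0)
    (h34 : ⁅b 2, b 3⁆ = 0)
    (h35 : ⁅b 2, b 4⁆ = 0)
    (h45 : ⁅b 3, b 4⁆ = 0)
    : ∀ B : L →ₗ[ℝ] L →ₗ[ℝ] ℝ, IsInnerProduct B →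
      ∀ a₂ a₃ a₄ a₅ : ℝ, a₂ ≠ 0 →
        IsGeodesicVector B (a₂ • b 1 + a₃ • b 2 + a₄ • b 3 + a₅ • b 4) →
        ∀ v ∈ Submodule.span ℝ {b 3, b 4},
          B (a₂ • b 1 + a₃ • b 2 + a₄ • b 3 + a₅ • b 4) v = 0 :=
  example_algebra_geodesic_in_V2_orthogonal_V4_general b h23 h24 h34 h35 h45
end

section
/- Let 𝔤 be a 5-dimensional real Lie algebra with basis {X₁,X₂,X₃,X₄,X₅} satisfying [X₁,X₂] = 3X₂, [X₁,X₃] = −4X₃, [X₁,X₄] = −X₄, [X₁,X₅] = 2X₅, [X₂,X₃] = X₄, [X₂,X₄] = X₅, and all other brackets of basis elements zero, equipped with the inner product making {X₁,…,X₅} orthonormal. Then the span of the set of all geodesic vectors of 𝔤 equals the orthogonal complement of X₄; in particular the geodesic vectors do not span 𝔤. -/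
/-!
Write `Y = ∑ cᵢ • b i` (so `b i` is the paper's `X_{i+1}`). By bilinearity `Y` is geodesic
iff `⟨[b k, Y], Y⟩ = 0` for the five basis vectors, and these are five quadratic equations
in `c`. If `c₃ ≠ 0` they force `c₀ = 0`, then `c₁ = 0` and `c₄ = -c₂`, after which the first
equation reads `-2 c₂² - c₃² = 0`: so every geodesic vector is orthogonal to `b 3`.
Conversely `b 0`, `2 b 1 + √3 b 2` and `b 2 ± √2 b 4` are geodesic, and they span `(b 3)ᗮ`.
-/

lemma Module.Basis.mem_of_repr_eq_zero {ι R M : Type*} [Fintype ι] [Semiring R]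
    [AddCommMonoid M] [Module R M] (b : Module.Basis ι R M) {p : Submodule R M} {k : ι}
    (hp : ∀ i, i ≠ k → b i ∈ p) {v : M} (hv : b.repr v k = 0) : v ∈ p := by
  rw [← b.sum_repr v]
  refine p.sum_mem fun i _ => ?_
  by_cases hi : i = k
  · simp [hi, hv]
  · exact p.smul_mem _ (hp i hi)

lemma IsOrthonormalFamily.apply_basis_right {L ι : Type*} [AddCommGroup L] [Module ℝ L]
    [DecidableEq ι] {B : L →ₗ[ℝ] L →ₗ[ℝ] ℝ} {b : Module.Basis ι ℝ L}
    (hB : IsOrthonormalFamily B b) (v : L) (i : ι) : B v (b i) = b.repr v i := by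
  have : B.flip (b i) = b.coord i :=
    b.ext fun j => by simp [hB j i, Finsupp.single_apply]
  exact LinearMap.congr_fun this v

lemma isGeodesicVector_iff_basis {L ι : Type*} [LieRing L] [LieAlgebra ℝ L] [Fintype ι]
    {B : L →ₗ[ℝ] L →ₗ[ℝ] ℝ} (b : Module.Basis ι ℝ L) {Y : L} :
    IsGeodesicVector B Y ↔ Y ≠ 0 ∧ ∀ i, B ⁅b i, Y⁆ Y = 0 := by
  refine and_congr_right fun _ => ⟨fun h i => h (b i), fun h X => ?_⟩
  rw [← b.sum_repr X, sum_lie, map_sum, LinearMap.sum_apply]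
  simp [h]

structure IsExampleLieBasis {L : Type*} [LieRing L] [LieAlgebra ℝ L]
    (b : Module.Basis (Fin 5) ℝ L) : Prop where
  lie_zero_one : ⁅b 0, b 1⁆ = (3 : ℝ) • b 1
  lie_zero_two : ⁅b 0, b 2⁆ = (-4 : ℝ) • b 2
  lie_zero_three : ⁅b 0, b 3⁆ = -b 3
  lie_zero_four : ⁅b 0, b 4⁆ = (2 : ℝ) • b 4
  lie_one_two : ⁅b 1, b 2⁆ = b 3
  lie_one_three : ⁅b 1, b 3⁆ = b 4
  lie_one_four : ⁅b 1, b 4⁆ = 0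
  lie_two_three : ⁅b 2, b 3⁆ = 0
  lie_two_four : ⁅b 2, b 4⁆ = 0
  lie_three_four : ⁅b 3, b 4⁆ = 0

namespace IsExampleLieBasis

def geodesicForm (c : Fin 5 → ℝ) : Fin 5 → ℝ :=
  ![3 * c 1 ^ 2 - 4 * c 2 ^ 2 - c 3 ^ 2 + 2 * c 4 ^ 2,
    -3 * c 0 * c 1 + c 2 * c 3 + c 3 * c 4,
    4 * c 0 * c 2 - c 1 * c 3,
    c 0 * c 3 - c 1 * c 4,
    -2 * c 0 * c 4]

lemma coord_three_eq_zero_of_geodesicForm_eq_zero {c : Fin 5 → ℝ}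
    (hc : ∀ k, geodesicForm c k = 0) : c 3 = 0 := by
  have e0 : 3 * c 1 ^ 2 - 4 * c 2 ^ 2 - c 3 ^ 2 + 2 * c 4 ^ 2 = 0 := hc 0
  have e1 : -3 * c 0 * c 1 + c 2 * c 3 + c 3 * c 4 = 0 := hc 1
  have e2 : 4 * c 0 * c 2 - c 1 * c 3 = 0 := hc 2
  have e3 : c 0 * c 3 - c 1 * c 4 = 0 := hc 3
  have e4 : -2 * c 0 * c 4 = 0 := hc 4
  by_contra h3
  have h0 : c 0 = 0 := by
    rcases mul_eq_zero.mp (show c 0 * c 4 = 0 by linarith) with h0 | h4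
    · exact h0
    · exact (mul_eq_zero.mp (show c 0 * c 3 = 0 by rw [h4] at e3; linarith)).resolve_right h3
  have h1 : c 1 = 0 :=
    (mul_eq_zero.mp (show c 1 * c 3 = 0 by rw [h0] at e2; linarith)).resolve_right h3
  have h4 : c 4 = -c 2 := by
    have := (mul_eq_zero.mp (show c 3 * (c 2 + c 4) = 0 by rw [h0] at e1; linarith)).resolve_left h3
    linarith
  rw [h1, h4] at e0
  exact h3 (pow_eq_zero_iff two_ne_zero |>.mp (by nlinarith [sq_nonneg (c 2)]))

variable {L : Type*} [LieRing L] [LieAlgebra ℝ L] {b : Module.Basis (Fin 5) ℝ L}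

lemma lie_basis (hb : IsExampleLieBasis b) (i j : Fin 5) :
    ⁅b i, b j⁆ = ![![0, (3 : ℝ) • b 1, (-4 : ℝ) • b 2, -b 3, (2 : ℝ) • b 4],
      ![(-3 : ℝ) • b 1, 0, b 3, b 4, 0],
      ![(4 : ℝ) • b 2, -b 3, 0, 0, 0],
      ![b 3, -b 4, 0, 0, 0],
      ![(-2 : ℝ) • b 4, 0, 0, 0, 0]] i j := by
  obtain ⟨h01, h02, h03, h04, h12, h13, h14, h23, h24, h34⟩ := hb
  fin_cases i <;> fin_cases j <;>
    first
    | simp [h01, h02, h03, h04, h12, h13, h14, h23, h24, h34]; done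
    | rw [← lie_skew]; simp [h01, h02, h03, h04, h12, h13, h14, h23, h24, h34]

variable {B : L →ₗ[ℝ] L →ₗ[ℝ] ℝ}

lemma apply_lie_basis_self (hb : IsExampleLieBasis b) (hB : IsOrthonormalFamily B b)
    (k : Fin 5) (Y : L) : B ⁅b k, Y⁆ Y = geodesicForm (b.repr Y) k := by
  obtain ⟨c, rfl⟩ : ∃ c, Y = ∑ i, c i • b i := ⟨b.repr Y, (b.sum_repr Y).symm⟩
  rw [b.repr_sum_self]
  fin_cases k <;>
    simp [Fin.sum_univ_five, hb.lie_basis, hB _ _, geodesicForm] <;> ring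

lemma isGeodesicVector_iff (hb : IsExampleLieBasis b) (hB : IsOrthonormalFamily B b) {Y : L} :
    IsGeodesicVector B Y ↔ Y ≠ 0 ∧ ∀ k, geodesicForm (b.repr Y) k = 0 := by
  simp only [isGeodesicVector_iff_basis b, hb.apply_lie_basis_self hB]

lemma repr_three_eq_zero_of_isGeodesicVector (hb : IsExampleLieBasis b)
    (hB : IsOrthonormalFamily B b) {Y : L} (hY : IsGeodesicVector B Y) : b.repr Y 3 = 0 :=
  coord_three_eq_zero_of_geodesicForm_eq_zero ((hb.isGeodesicVector_iff hB).1 hY).2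

lemma sum_smul_mem_span_geodesic (hb : IsExampleLieBasis b) (hB : IsOrthonormalFamily B b)
    {c : Fin 5 → ℝ} (hc : c ≠ 0) (hform : ∀ k, geodesicForm c k = 0) :
    ∑ i, c i • b i ∈ Submodule.span ℝ {Y | IsGeodesicVector B Y} := by
  refine Submodule.subset_span ((hb.isGeodesicVector_iff hB).2 ⟨fun h => hc ?_, ?_⟩)
  · simpa only [b.repr_sum_self, map_zero, Finsupp.coe_zero] using
      congrArg (fun v => ⇑(b.repr v)) h
  · rwa [b.repr_sum_self]

lemma basis_mem_span_geodesic (hb : IsExampleLieBasis b) (hB : IsOrthonormalFamily B b)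
    {i : Fin 5} (hi : i ≠ 3) : b i ∈ Submodule.span ℝ {Y | IsGeodesicVector B Y} := by
  set S := Submodule.span ℝ {Y | IsGeodesicVector B Y}
  have e0 := hb.sum_smul_mem_span_geodesic hB (c := ![1, 0, 0, 0, 0])
    (fun h => by simpa using congrFun h 0) (by simp [Fin.forall_fin_succ, geodesicForm])
  have e1 := hb.sum_smul_mem_span_geodesic hB (c := ![0, 2, √3, 0, 0])
    (fun h => by simpa using congrFun h 1) (by simp [Fin.forall_fin_succ, geodesicForm]; norm_num)
  have e2 := hb.sum_smul_mem_span_geodesic hB (c := ![0, 0, 1, 0, √2])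
    (fun h => by simpa using congrFun h 2) (by simp [Fin.forall_fin_succ, geodesicForm]; norm_num)
  have e2' := hb.sum_smul_mem_span_geodesic hB (c := ![0, 0, 1, 0, -√2])
    (fun h => by simpa using congrFun h 2) (by simp [Fin.forall_fin_succ, geodesicForm]; norm_num)
  simp only [Fin.sum_univ_five, Matrix.cons_val, zero_smul, one_smul, add_zero, zero_add]
    at e0 e1 e2 e2'
  have m2 : b 2 ∈ S := by
    convert S.smul_mem (1 / 2 : ℝ) (S.add_mem e2 e2') using 1
    module
  have m4 : b 4 ∈ S := by
    convert S.smul_mem (2 * √2)⁻¹ (S.sub_mem e2 e2') using 1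
    rw [add_sub_add_left_eq_sub, ← sub_smul, smul_smul, sub_neg_eq_add, ← two_mul,
      inv_mul_cancel₀ (by positivity), one_smul]
  have m1 : b 1 ∈ S := by
    convert S.smul_mem (1 / 2 : ℝ) (S.sub_mem e1 (S.smul_mem √3 m2)) using 1
    module
  fin_cases i
  exacts [e0, m1, m2, absurd rfl hi, m4]

lemma span_setOf_isGeodesicVector (hb : IsExampleLieBasis b) (hB : IsOrthonormalFamily B b) :
    Submodule.span ℝ {Y | IsGeodesicVector B Y} = LinearMap.ker (B.flip (b 3)) := by
  apply le_antisymm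
  · rw [Submodule.span_le]
    intro Y hY
    simpa [hB.apply_basis_right] using hb.repr_three_eq_zero_of_isGeodesicVector hB hY
  · intro v hv
    refine b.mem_of_repr_eq_zero (fun i hi => hb.basis_mem_span_geodesic hB hi) ?_
    simpa [hB.apply_basis_right] using hv

end IsExampleLieBasis

/-- For the Example algebra with the inner product making `X₁,…,X₅`
orthonormal, the span of the geodesic vectors is exactly the orthogonal complement of
`X₄`; in particular the geodesic vectors do not span the algebra. -/
theorem example_algebra_orthonormal_inner_product_geodesic_span
    {L : Type*} [LieRing L] [LieAlgebra ℝ L]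
    (b : Module.Basis (Fin 5) ℝ L)
    (h12 : ⁅b 0, b 1⁆ = (3 : ℝ) • b 1)
    (h13 : ⁅b 0, b 2⁆ = (-4 : ℝ) • b 2)
    (h14 : ⁅b 0, b 3⁆ = -b 3)
    (h15 : ⁅b 0, b 4⁆ = (2 : ℝ) • b 4)
    (h23 : ⁅b 1, b 2⁆ = b 3)
    (h24 : ⁅b 1, b 3⁆ = b 4)
    (h25 : ⁅b 1, b 4⁆ = 0)
    (h34 : ⁅b 2, b 3⁆ = 0)
    (h35 : ⁅b 2, b 4⁆ = 0)
    (h45 : ⁅b 3, b 4⁆ = 0)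
    : ∀ B : L →ₗ[ℝ] L →ₗ[ℝ] ℝ, IsInnerProduct B → IsOrthonormalFamily B b →
      ((Submodule.span ℝ {Y : L | IsGeodesicVector B Y} : Set L)
          = {v : L | B v (b 3) = 0} ∧
        Submodule.span ℝ {Y : L | IsGeodesicVector B Y} ≠ ⊤) := by
  intro B _ hB
  have hspan := IsExampleLieBasis.span_setOf_isGeodesicVector
    ⟨h12, h13, h14, h15, h23, h24, h25, h34, h35, h45⟩ hB
  refine ⟨by ext v; simp [hspan], fun htop => ?_⟩
  have h33 : b 3 ∈ LinearMap.ker (B.flip (b 3)) := hspan ▸ htop ▸ Submodule.mem_top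
  simp [hB 3 3] at h33
end
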